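/- arXiv:1209.4279 — 9 statements merged into one kernel-verified Lean document; each statement's English description precedes it below -/
import Mathlib

section
/- Let Λ¹, Λ² : ℝ² × ℝ × (0,∞) → ℝ be smooth functions of (t,x,U,H). Then Λ¹ and Λ² satisfy the determining equations for conservation-law multipliers of the one-dimensional shallow-water equations, namely Λ¹_H − Λ²_U = 0, Λ¹_U − H·Λ²_H = 0, Λ²_t + U·Λ²_x + Λ¹_x = 0 and Λ¹_t + U·Λ¹_x + H·Λ²_x = 0 identically on ℝ² × ℝ × (0,∞), if and only if there exist a constant c₁ ∈ ℝ and smooth functions λ¹, λ² : ℝ × (0,∞) → ℝ of (U,H) satisfying λ¹_H − λ²_U = 0 and λ¹_U − H·λ²_H = 0 such that Λ¹(t,x,U,H) = −c₁·t·H + λ¹(U,H) and Λ²(t,x,U,H) = c₁·(x − t·U) + λ²(U,H). -/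
/-- Partial derivative of a function of (t,x,U,H) with respect to t. -/
noncomputable def pT (f : ℝ → ℝ → ℝ → ℝ → ℝ) (t x U H : ℝ) : ℝ :=
  deriv (fun s => f s x U H) t

/-- Partial derivative of a function of (t,x,U,H) with respect to x. -/
noncomputable def pX (f : ℝ → ℝ → ℝ → ℝ → ℝ) (t x U H : ℝ) : ℝ :=
  deriv (fun s => f t s U H) x

/-- Partial derivative of a function of (t,x,U,H) with respect to U. -/
noncomputable def pU (f : ℝ → ℝ → ℝ → ℝ → ℝ) (t x U H : ℝ) : ℝ :=
  deriv (fun s => f t x s H) U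

/-- Partial derivative of a function of (t,x,U,H) with respect to H. -/
noncomputable def pH (f : ℝ → ℝ → ℝ → ℝ → ℝ) (t x U H : ℝ) : ℝ :=
  deriv (fun s => f t x U s) H

/-- Partial derivative of a function of (U,H) with respect to U. -/
noncomputable def qU (f : ℝ → ℝ → ℝ) (U H : ℝ) : ℝ := deriv (fun s => f s H) U

/-- Partial derivative of a function of (U,H) with respect to H. -/
noncomputable def qH (f : ℝ → ℝ → ℝ) (U H : ℝ) : ℝ := deriv (fun s => f U s) H


open Filter Topology

noncomputable section SWMaux

abbrev E4 := ℝ × ℝ × ℝ × ℝ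

def S4 : Set E4 := {p : E4 | 0 < p.2.2.2}

lemma isOpen_S4 : IsOpen S4 := by
  apply isOpen_lt continuous_const
  fun_prop

def e1 : E4 := (1,0,0,0)
def e2 : E4 := (0,1,0,0)
def e3 : E4 := (0,0,1,0)
def e4 : E4 := (0,0,0,1)

lemma hasDerivAt_lineT (G : E4 → ℝ) (t x U H : ℝ) (h : DifferentiableAt ℝ G (t,x,U,H)) :
    HasDerivAt (fun s => G (s,x,U,H)) (fderiv ℝ G (t,x,U,H) e1) t := by
  have hι : HasDerivAt (fun s : ℝ => ((s,x,U,H) : E4)) e1 t :=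
    (hasDerivAt_id t).prodMk (hasDerivAt_const t ((x,U,H) : ℝ×ℝ×ℝ))
  exact h.hasFDerivAt.comp_hasDerivAt t hι

lemma hasDerivAt_lineX (G : E4 → ℝ) (t x U H : ℝ) (h : DifferentiableAt ℝ G (t,x,U,H)) :
    HasDerivAt (fun s => G (t,s,U,H)) (fderiv ℝ G (t,x,U,H) e2) x := by
  have hι : HasDerivAt (fun s : ℝ => ((t,s,U,H) : E4)) e2 x :=
    (hasDerivAt_const x t).prodMk ((hasDerivAt_id x).prodMk (hasDerivAt_const x ((U,H) : ℝ×ℝ)))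
  exact h.hasFDerivAt.comp_hasDerivAt x hι

lemma hasDerivAt_lineU (G : E4 → ℝ) (t x U H : ℝ) (h : DifferentiableAt ℝ G (t,x,U,H)) :
    HasDerivAt (fun s => G (t,x,s,H)) (fderiv ℝ G (t,x,U,H) e3) U := by
  have hι : HasDerivAt (fun s : ℝ => ((t,x,s,H) : E4)) e3 U :=
    (hasDerivAt_const U t).prodMk ((hasDerivAt_const U x).prodMk
      ((hasDerivAt_id U).prodMk (hasDerivAt_const U H)))
  exact h.hasFDerivAt.comp_hasDerivAt U hι

lemma hasDerivAt_lineH (G : E4 → ℝ) (t x U H : ℝ) (h : DifferentiableAt ℝ G (t,x,U,H)) :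
    HasDerivAt (fun s => G (t,x,U,s)) (fderiv ℝ G (t,x,U,H) e4) H := by
  have hι : HasDerivAt (fun s : ℝ => ((t,x,U,s) : E4)) e4 H :=
    (hasDerivAt_const H t).prodMk ((hasDerivAt_const H x).prodMk
      ((hasDerivAt_const H U).prodMk (hasDerivAt_id H)))
  exact h.hasFDerivAt.comp_hasDerivAt H hι

lemma diffAt (F : E4 → ℝ) (hF : ContDiffOn ℝ (⊤ : ℕ∞) F S4) {p : E4} (hp : p ∈ S4) :
    DifferentiableAt ℝ F p :=
  (hF.contDiffAt (isOpen_S4.mem_nhds hp)).differentiableAt (by simp)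

lemma contDiffOn_D (F : E4 → ℝ) (hF : ContDiffOn ℝ (⊤ : ℕ∞) F S4) (v : E4) :
    ContDiffOn ℝ (⊤ : ℕ∞) (fun q => fderiv ℝ F q v) S4 := by
  have h1 : ContDiffOn ℝ (⊤ : ℕ∞) (fderiv ℝ F) S4 := hF.fderiv_of_isOpen isOpen_S4 (by simp)
  exact (ContinuousLinearMap.apply ℝ ℝ v).contDiff.comp_contDiffOn h1

/-- second partial: direction `v` of the `w`-partial -/
def M2 (F : E4 → ℝ) (p v w : E4) : ℝ := fderiv ℝ (fun q => fderiv ℝ F q w) p v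

lemma M2_comm (F : E4 → ℝ) (hF : ContDiffOn ℝ (⊤ : ℕ∞) F S4) {p : E4} (hp : p ∈ S4) (v w : E4) :
    M2 F p v w = M2 F p w v := by
  have hf : ∀ᶠ y in 𝓝 p, HasFDerivAt F (fderiv ℝ F y) y := by
    filter_upwards [isOpen_S4.mem_nhds hp] with y hy using (diffAt F hF hy).hasFDerivAt
  have hd : DifferentiableAt ℝ (fderiv ℝ F) p :=
    ((hF.fderiv_of_isOpen (m := (⊤ : ℕ∞)) isOpen_S4 (by simp)).contDiffAt (isOpen_S4.mem_nhds hp)).differentiableAt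
      (by simp)
  have hx : HasFDerivAt (fderiv ℝ F) (fderiv ℝ (fderiv ℝ F) p) p := hd.hasFDerivAt
  have hsymm := second_derivative_symmetric_of_eventually hf hx v w
  have h1 : ∀ u : E4, fderiv ℝ (fun q => fderiv ℝ F q u) p
      = (ContinuousLinearMap.apply ℝ ℝ u).comp (fderiv ℝ (fderiv ℝ F) p) :=
    fun u => (((ContinuousLinearMap.apply ℝ ℝ u).hasFDerivAt).comp p hx).fderiv
  show fderiv ℝ (fun q => fderiv ℝ F q w) p v = fderiv ℝ (fun q => fderiv ℝ F q v) p w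
  rw [h1 w, h1 v]
  simpa using hsymm


lemma derivs_eq {f g : ℝ → ℝ} {d d' u : ℝ} (hf : HasDerivAt f d u) (hg : HasDerivAt g d' u)
    (h : ∀ᶠ s in 𝓝 u, f s = g s) : d = d' := by
  rw [← hf.deriv, ← hg.deriv]
  exact Filter.EventuallyEq.deriv_eq h

lemma lineD_T (F : E4 → ℝ) (hF : ContDiffOn ℝ (⊤ : ℕ∞) F S4) (v : E4) (t x U H : ℝ) (hH : 0 < H) :
    HasDerivAt (fun s => fderiv ℝ F (s,x,U,H) v) (M2 F (t,x,U,H) e1 v) t :=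
  hasDerivAt_lineT _ t x U H (((contDiffOn_D F hF v).contDiffAt
    (isOpen_S4.mem_nhds hH)).differentiableAt (by simp))

lemma lineD_X (F : E4 → ℝ) (hF : ContDiffOn ℝ (⊤ : ℕ∞) F S4) (v : E4) (t x U H : ℝ) (hH : 0 < H) :
    HasDerivAt (fun s => fderiv ℝ F (t,s,U,H) v) (M2 F (t,x,U,H) e2 v) x :=
  hasDerivAt_lineX _ t x U H (((contDiffOn_D F hF v).contDiffAt
    (isOpen_S4.mem_nhds hH)).differentiableAt (by simp))

lemma lineD_U (F : E4 → ℝ) (hF : ContDiffOn ℝ (⊤ : ℕ∞) F S4) (v : E4) (t x U H : ℝ) (hH : 0 < H) :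
    HasDerivAt (fun s => fderiv ℝ F (t,x,s,H) v) (M2 F (t,x,U,H) e3 v) U :=
  hasDerivAt_lineU _ t x U H (((contDiffOn_D F hF v).contDiffAt
    (isOpen_S4.mem_nhds hH)).differentiableAt (by simp))

lemma lineD_H (F : E4 → ℝ) (hF : ContDiffOn ℝ (⊤ : ℕ∞) F S4) (v : E4) (t x U H : ℝ) (hH : 0 < H) :
    HasDerivAt (fun s => fderiv ℝ F (t,x,U,s) v) (M2 F (t,x,U,H) e4 v) H :=
  hasDerivAt_lineH _ t x U H (((contDiffOn_D F hF v).contDiffAt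
    (isOpen_S4.mem_nhds hH)).differentiableAt (by simp))

theorem swm_forward (F1 F2 : E4 → ℝ)
    (hF1 : ContDiffOn ℝ (⊤ : ℕ∞) F1 S4) (hF2 : ContDiffOn ℝ (⊤ : ℕ∞) F2 S4)
    (hA : ∀ t x U H : ℝ, 0 < H →
      fderiv ℝ F1 (t,x,U,H) e4 = fderiv ℝ F2 (t,x,U,H) e3)
    (hB : ∀ t x U H : ℝ, 0 < H →
      fderiv ℝ F1 (t,x,U,H) e3 = H * fderiv ℝ F2 (t,x,U,H) e4)
    (hC : ∀ t x U H : ℝ, 0 < H →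
      fderiv ℝ F2 (t,x,U,H) e1 + U * fderiv ℝ F2 (t,x,U,H) e2
        + fderiv ℝ F1 (t,x,U,H) e2 = 0)
    (hD : ∀ t x U H : ℝ, 0 < H →
      fderiv ℝ F1 (t,x,U,H) e1 + U * fderiv ℝ F1 (t,x,U,H) e2
        + H * fderiv ℝ F2 (t,x,U,H) e2 = 0) :
    ∀ t x U H : ℝ, 0 < H →
      F1 (t,x,U,H) = -(fderiv ℝ F2 (0,0,0,1) e2) * t * H + F1 (0,0,U,H) ∧
      F2 (t,x,U,H) = (fderiv ℝ F2 (0,0,0,1) e2) * (x - t * U) + F2 (0,0,U,H) := by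
  have mem : ∀ t x U H : ℝ, 0 < H → ((t,x,U,H) : E4) ∈ S4 := fun _ _ _ _ h => h
  -- Step 1 : Λ¹ₓ = 0
  have hZ : ∀ t x U H : ℝ, 0 < H → fderiv ℝ F1 (t,x,U,H) e2 = 0 := by
    intro t x U H hH
    have hBt : M2 F1 (t,x,U,H) e1 e3 = H * M2 F2 (t,x,U,H) e1 e4 :=
      derivs_eq (lineD_T F1 hF1 e3 t x U H hH)
        ((lineD_T F2 hF2 e4 t x U H hH).const_mul H)
        (Eventually.of_forall fun s => hB s x U H hH)
    have hBx : M2 F1 (t,x,U,H) e2 e3 = H * M2 F2 (t,x,U,H) e2 e4 :=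
      derivs_eq (lineD_X F1 hF1 e3 t x U H hH)
        ((lineD_X F2 hF2 e4 t x U H hH).const_mul H)
        (Eventually.of_forall fun s => hB t s U H hH)
    have hAx : M2 F1 (t,x,U,H) e2 e4 = M2 F2 (t,x,U,H) e2 e3 :=
      derivs_eq (lineD_X F1 hF1 e4 t x U H hH) (lineD_X F2 hF2 e3 t x U H hH)
        (Eventually.of_forall fun s => hA t s U H hH)
    have hCH : M2 F2 (t,x,U,H) e4 e1 + U * M2 F2 (t,x,U,H) e4 e2
        + M2 F1 (t,x,U,H) e4 e2 = 0 :=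
      derivs_eq (((lineD_H F2 hF2 e1 t x U H hH).add
          ((lineD_H F2 hF2 e2 t x U H hH).const_mul U)).add
          (lineD_H F1 hF1 e2 t x U H hH))
        (hasDerivAt_const H (0:ℝ))
        (Filter.eventually_of_mem (isOpen_Ioi.mem_nhds hH) (fun s hs => hC t x U s hs))
    have hDU : M2 F1 (t,x,U,H) e3 e1
        + (1 * fderiv ℝ F1 (t,x,U,H) e2 + U * M2 F1 (t,x,U,H) e3 e2)
        + H * M2 F2 (t,x,U,H) e3 e2 = 0 :=
      derivs_eq (((lineD_U F1 hF1 e1 t x U H hH).add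
          ((hasDerivAt_id U).mul (lineD_U F1 hF1 e2 t x U H hH))).add
          ((lineD_U F2 hF2 e2 t x U H hH).const_mul H))
        (hasDerivAt_const U (0:ℝ))
        (Eventually.of_forall fun s => hD t x s H hH)
    have c1 : M2 F1 (t,x,U,H) e3 e1 = H * M2 F2 (t,x,U,H) e4 e1 := by
      rw [M2_comm F1 hF1 (mem t x U H hH) e3 e1, hBt,
        M2_comm F2 hF2 (mem t x U H hH) e1 e4]
    have c2 : M2 F1 (t,x,U,H) e3 e2 = H * M2 F2 (t,x,U,H) e4 e2 := by
      rw [M2_comm F1 hF1 (mem t x U H hH) e3 e2, hBx,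
        M2_comm F2 hF2 (mem t x U H hH) e2 e4]
    have c3 : M2 F1 (t,x,U,H) e4 e2 = M2 F2 (t,x,U,H) e3 e2 := by
      rw [M2_comm F1 hF1 (mem t x U H hH) e4 e2, hAx,
        M2_comm F2 hF2 (mem t x U H hH) e2 e3]
    rw [c1, c2] at hDU
    rw [c3] at hCH
    linear_combination hDU - H * hCH
  -- derivatives of Λ¹ₓ vanish
  have hZ' : ∀ (v : E4) (t x U H : ℝ), 0 < H → M2 F1 (t,x,U,H) v e2 = 0 := by
    intro v t x U H hH
    have hev : (fun q => fderiv ℝ F1 q e2) =ᶠ[𝓝 ((t,x,U,H) : E4)] (fun _ => (0:ℝ)) :=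
      Filter.eventually_of_mem (isOpen_S4.mem_nhds (mem t x U H hH))
        (fun q hq => hZ q.1 q.2.1 q.2.2.1 q.2.2.2 hq)
    show fderiv ℝ (fun q => fderiv ℝ F1 q e2) (t,x,U,H) v = 0
    rw [hev.fderiv_eq]
    simp
  -- all derivatives of Λ²ₓ vanish
  have hXU : ∀ t x U H : ℝ, 0 < H → M2 F2 (t,x,U,H) e3 e2 = 0 := by
    intro t x U H hH
    have hAx : M2 F1 (t,x,U,H) e2 e4 = M2 F2 (t,x,U,H) e2 e3 :=
      derivs_eq (lineD_X F1 hF1 e4 t x U H hH) (lineD_X F2 hF2 e3 t x U H hH)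
        (Eventually.of_forall fun s => hA t s U H hH)
    rw [M2_comm F1 hF1 (mem t x U H hH) e2 e4, hZ' e4 t x U H hH] at hAx
    rw [M2_comm F2 hF2 (mem t x U H hH) e3 e2, ← hAx]
  have hXH : ∀ t x U H : ℝ, 0 < H → M2 F2 (t,x,U,H) e4 e2 = 0 := by
    intro t x U H hH
    have hBx : M2 F1 (t,x,U,H) e2 e3 = H * M2 F2 (t,x,U,H) e2 e4 :=
      derivs_eq (lineD_X F1 hF1 e3 t x U H hH)
        ((lineD_X F2 hF2 e4 t x U H hH).const_mul H)
        (Eventually.of_forall fun s => hB t s U H hH)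
    rw [M2_comm F1 hF1 (mem t x U H hH) e2 e3, hZ' e3 t x U H hH,
      M2_comm F2 hF2 (mem t x U H hH) e2 e4] at hBx
    have := hBx.symm
    rcases mul_eq_zero.1 this with h | h
    · exact absurd h (ne_of_gt hH)
    · exact h
  have hXX : ∀ t x U H : ℝ, 0 < H → M2 F2 (t,x,U,H) e2 e2 = 0 := by
    intro t x U H hH
    have hDx : M2 F1 (t,x,U,H) e2 e1 + U * M2 F1 (t,x,U,H) e2 e2
        + H * M2 F2 (t,x,U,H) e2 e2 = 0 :=
      derivs_eq (((lineD_X F1 hF1 e1 t x U H hH).add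
          ((lineD_X F1 hF1 e2 t x U H hH).const_mul U)).add
          ((lineD_X F2 hF2 e2 t x U H hH).const_mul H))
        (hasDerivAt_const x (0:ℝ))
        (Eventually.of_forall fun s => hD t s U H hH)
    rw [M2_comm F1 hF1 (mem t x U H hH) e2 e1, hZ' e1 t x U H hH,
      M2_comm F1 hF1 (mem t x U H hH) e2 e2, hZ' e2 t x U H hH] at hDx
    have h' : H * M2 F2 (t,x,U,H) e2 e2 = 0 := by linarith
    rcases mul_eq_zero.1 h' with h | h
    · exact absurd h (ne_of_gt hH)
    · exact h
  have hXT : ∀ t x U H : ℝ, 0 < H → M2 F2 (t,x,U,H) e1 e2 = 0 := by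
    intro t x U H hH
    have hCx : M2 F2 (t,x,U,H) e2 e1 + U * M2 F2 (t,x,U,H) e2 e2
        + M2 F1 (t,x,U,H) e2 e2 = 0 :=
      derivs_eq (((lineD_X F2 hF2 e1 t x U H hH).add
          ((lineD_X F2 hF2 e2 t x U H hH).const_mul U)).add
          (lineD_X F1 hF1 e2 t x U H hH))
        (hasDerivAt_const x (0:ℝ))
        (Eventually.of_forall fun s => hC t s U H hH)
    rw [hXX t x U H hH, M2_comm F1 hF1 (mem t x U H hH) e2 e2, hZ' e2 t x U H hH,
      M2_comm F2 hF2 (mem t x U H hH) e2 e1] at hCx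
    linarith
  -- Λ²ₓ is constant
  set c : ℝ := fderiv ℝ F2 ((0:ℝ),(0:ℝ),(0:ℝ),(1:ℝ)) e2 with hc
  have hconst : ∀ t x U H : ℝ, 0 < H → fderiv ℝ F2 (t,x,U,H) e2 = c := by
    intro t x U H hH
    have h01 : fderiv ℝ F2 (t,x,U,H) e2 = fderiv ℝ F2 (0,x,U,H) e2 := by
      have hd : ∀ s : ℝ, HasDerivAt (fun s' => fderiv ℝ F2 (s',x,U,H) e2) 0 s := by
        intro s
        have h := lineD_T F2 hF2 e2 s x U H hH
        rwa [hXT s x U H hH] at h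
      exact is_const_of_deriv_eq_zero (fun s => (hd s).differentiableAt)
        (fun s => (hd s).deriv) t 0
    have h02 : fderiv ℝ F2 (0,x,U,H) e2 = fderiv ℝ F2 (0,0,U,H) e2 := by
      have hd : ∀ s : ℝ, HasDerivAt (fun s' => fderiv ℝ F2 (0,s',U,H) e2) 0 s := by
        intro s
        have h := lineD_X F2 hF2 e2 0 s U H hH
        rwa [hXX 0 s U H hH] at h
      exact is_const_of_deriv_eq_zero (fun s => (hd s).differentiableAt)
        (fun s => (hd s).deriv) x 0
    have h03 : fderiv ℝ F2 (0,0,U,H) e2 = fderiv ℝ F2 (0,0,0,H) e2 := by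
      have hd : ∀ s : ℝ, HasDerivAt (fun s' => fderiv ℝ F2 (0,0,s',H) e2) 0 s := by
        intro s
        have h := lineD_U F2 hF2 e2 0 0 s H hH
        rwa [hXU 0 0 s H hH] at h
      exact is_const_of_deriv_eq_zero (fun s => (hd s).differentiableAt)
        (fun s => (hd s).deriv) U 0
    have h04 : fderiv ℝ F2 (0,0,0,H) e2 = fderiv ℝ F2 (0,0,0,1) e2 := by
      have hds : ∀ s : ℝ, 0 < s →
          HasDerivAt (fun s' => fderiv ℝ F2 (0,0,0,s') e2) 0 s := by
        intro s hs
        have h := lineD_H F2 hF2 e2 0 0 0 s hs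
        rwa [hXH 0 0 0 s hs] at h
      have ha : (0:ℝ) < min H 1 := lt_min hH one_pos
      have hcont : ContinuousOn (fun s' => fderiv ℝ F2 (0,0,0,s') e2)
          (Set.Icc (min H 1) (max H 1)) := fun s hs =>
        ((hds s (lt_of_lt_of_le ha hs.1)).differentiableAt.continuousAt).continuousWithinAt
      have key := constant_of_has_deriv_right_zero hcont
        (fun s hs => ((hds s (lt_of_lt_of_le ha hs.1)).hasDerivWithinAt))
      have k1 := key H ⟨min_le_left _ _, le_max_left _ _⟩
      have k2 := key 1 ⟨min_le_right _ _, le_max_right _ _⟩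
      exact k1.trans k2.symm
    rw [h01, h02, h03, h04]
  -- first-order values
  have hval2t : ∀ t x U H : ℝ, 0 < H → fderiv ℝ F2 (t,x,U,H) e1 = -(U * c) := by
    intro t x U H hH
    have h := hC t x U H hH
    rw [hZ t x U H hH, hconst t x U H hH] at h
    linarith
  have hval1t : ∀ t x U H : ℝ, 0 < H → fderiv ℝ F1 (t,x,U,H) e1 = -(H * c) := by
    intro t x U H hH
    have h := hD t x U H hH
    rw [hZ t x U H hH, hconst t x U H hH] at h
    linarith
  -- integration
  intro t x U H hH
  constructor
  · have hg : ∀ s : ℝ, HasDerivAt (fun s' => F1 (s',x,U,H) + (H*c) * s') 0 s := by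
      intro s
      have h1 := hasDerivAt_lineT F1 s x U H (diffAt F1 hF1 (mem s x U H hH))
      rw [hval1t s x U H hH] at h1
      have h2 := h1.add ((hasDerivAt_id s).const_mul (H*c))
      have : -(H*c) + H*c*1 = 0 := by ring
      rwa [this] at h2
    have h1 : F1 (t,x,U,H) + (H*c)*t = F1 (0,x,U,H) + (H*c)*0 :=
      is_const_of_deriv_eq_zero (fun s => (hg s).differentiableAt)
        (fun s => (hg s).deriv) t 0
    have hgx : ∀ s : ℝ, HasDerivAt (fun s' => F1 (0,s',U,H)) 0 s := by
      intro s
      have h := hasDerivAt_lineX F1 0 s U H (diffAt F1 hF1 (mem 0 s U H hH))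
      rwa [hZ 0 s U H hH] at h
    have h2 : F1 (0,x,U,H) = F1 (0,0,U,H) :=
      is_const_of_deriv_eq_zero (fun s => (hgx s).differentiableAt)
        (fun s => (hgx s).deriv) x 0
    rw [h2] at h1
    linear_combination h1
  · have hg : ∀ s : ℝ, HasDerivAt (fun s' => F2 (s',x,U,H) + (U*c) * s') 0 s := by
      intro s
      have h1 := hasDerivAt_lineT F2 s x U H (diffAt F2 hF2 (mem s x U H hH))
      rw [hval2t s x U H hH] at h1
      have h2 := h1.add ((hasDerivAt_id s).const_mul (U*c))
      have : -(U*c) + U*c*1 = 0 := by ring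
      rwa [this] at h2
    have h1 : F2 (t,x,U,H) + (U*c)*t = F2 (0,x,U,H) + (U*c)*0 :=
      is_const_of_deriv_eq_zero (fun s => (hg s).differentiableAt)
        (fun s => (hg s).deriv) t 0
    have hgx : ∀ s : ℝ, HasDerivAt (fun s' => F2 (0,s',U,H) - c * s') 0 s := by
      intro s
      have h := hasDerivAt_lineX F2 0 s U H (diffAt F2 hF2 (mem 0 s U H hH))
      rw [hconst 0 s U H hH] at h
      have h2 := h.sub ((hasDerivAt_id s).const_mul c)
      have : c - c*1 = 0 := by ring
      rwa [this] at h2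
    have h2 : F2 (0,x,U,H) - c*x = F2 (0,0,U,H) - c*0 :=
      is_const_of_deriv_eq_zero (fun s => (hgx s).differentiableAt)
        (fun s => (hgx s).deriv) x 0
    linear_combination h1 + h2


lemma isOpen_S2 : IsOpen {p : ℝ × ℝ | 0 < p.2} := isOpen_lt continuous_const continuous_snd

lemma diff_slice_U (lam : ℝ → ℝ → ℝ)
    (hl : ContDiffOn ℝ (⊤ : ℕ∞) (fun p : ℝ × ℝ => lam p.1 p.2) {p : ℝ × ℝ | 0 < p.2})
    (U H : ℝ) (hH : 0 < H) : DifferentiableAt ℝ (fun s => lam s H) U := by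
  have h := (hl.contDiffAt (isOpen_S2.mem_nhds
    (show ((U,H) : ℝ × ℝ) ∈ {p : ℝ × ℝ | 0 < p.2} from hH))).differentiableAt (by simp)
  exact h.comp U (differentiableAt_fun_id.prodMk (differentiableAt_const H) :
    DifferentiableAt ℝ (fun s : ℝ => (s, H)) U)

lemma diff_slice_H (lam : ℝ → ℝ → ℝ)
    (hl : ContDiffOn ℝ (⊤ : ℕ∞) (fun p : ℝ × ℝ => lam p.1 p.2) {p : ℝ × ℝ | 0 < p.2})
    (U H : ℝ) (hH : 0 < H) : DifferentiableAt ℝ (fun s => lam U s) H := by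
  have h := (hl.contDiffAt (isOpen_S2.mem_nhds
    (show ((U,H) : ℝ × ℝ) ∈ {p : ℝ × ℝ | 0 < p.2} from hH))).differentiableAt (by simp)
  exact h.comp H ((differentiableAt_const U).prodMk differentiableAt_id)

end SWMaux


/-- Smooth multipliers Λ¹(t,x,U,H), Λ²(t,x,U,H) satisfy the determining equations for
conservation-law multipliers of the one-dimensional shallow-water equations if and only if
they are of the form Λ¹ = -c₁·t·H + λ¹(U,H), Λ² = c₁·(x - t·U) + λ²(U,H) for a constant c₁
and smooth functions λ¹, λ² satisfying λ¹_H = λ²_U and λ¹_U = H·λ²_H. -/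
theorem shallow_water_multiplier_classification
    (Λ1 Λ2 : ℝ → ℝ → ℝ → ℝ → ℝ)
    (hΛ1 : ContDiffOn ℝ (⊤ : ℕ∞) (fun p : ℝ × ℝ × ℝ × ℝ => Λ1 p.1 p.2.1 p.2.2.1 p.2.2.2)
      {p : ℝ × ℝ × ℝ × ℝ | 0 < p.2.2.2})
    (hΛ2 : ContDiffOn ℝ (⊤ : ℕ∞) (fun p : ℝ × ℝ × ℝ × ℝ => Λ2 p.1 p.2.1 p.2.2.1 p.2.2.2)
      {p : ℝ × ℝ × ℝ × ℝ | 0 < p.2.2.2}) :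
    (∀ t x U H : ℝ, 0 < H →
        pH Λ1 t x U H - pU Λ2 t x U H = 0 ∧
        pU Λ1 t x U H - H * pH Λ2 t x U H = 0 ∧
        pT Λ2 t x U H + U * pX Λ2 t x U H + pX Λ1 t x U H = 0 ∧
        pT Λ1 t x U H + U * pX Λ1 t x U H + H * pX Λ2 t x U H = 0)
    ↔
    (∃ (c₁ : ℝ) (lam1 lam2 : ℝ → ℝ → ℝ),
        ContDiffOn ℝ (⊤ : ℕ∞) (fun p : ℝ × ℝ => lam1 p.1 p.2) {p : ℝ × ℝ | 0 < p.2} ∧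
        ContDiffOn ℝ (⊤ : ℕ∞) (fun p : ℝ × ℝ => lam2 p.1 p.2) {p : ℝ × ℝ | 0 < p.2} ∧
        (∀ U H : ℝ, 0 < H →
          qH lam1 U H - qU lam2 U H = 0 ∧
          qU lam1 U H - H * qH lam2 U H = 0) ∧
        (∀ t x U H : ℝ, 0 < H →
          Λ1 t x U H = -c₁ * t * H + lam1 U H ∧
          Λ2 t x U H = c₁ * (x - t * U) + lam2 U H)) := by
  constructor
  · -- forward direction
    intro hyp
    have hdA : ∀ t x U H : ℝ, 0 < H →
        fderiv ℝ (fun p : E4 => Λ1 p.1 p.2.1 p.2.2.1 p.2.2.2) (t,x,U,H) e4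
          = fderiv ℝ (fun p : E4 => Λ2 p.1 p.2.1 p.2.2.1 p.2.2.2) (t,x,U,H) e3 := by
      intro t x U H hH
      have h := (hyp t x U H hH).1
      have r1 : pH Λ1 t x U H
          = fderiv ℝ (fun p : E4 => Λ1 p.1 p.2.1 p.2.2.1 p.2.2.2) (t,x,U,H) e4 :=
        (hasDerivAt_lineH _ t x U H (diffAt _ hΛ1 hH)).deriv
      have r2 : pU Λ2 t x U H
          = fderiv ℝ (fun p : E4 => Λ2 p.1 p.2.1 p.2.2.1 p.2.2.2) (t,x,U,H) e3 :=
        (hasDerivAt_lineU _ t x U H (diffAt _ hΛ2 hH)).deriv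
      rw [r1, r2] at h
      linarith
    have hdB : ∀ t x U H : ℝ, 0 < H →
        fderiv ℝ (fun p : E4 => Λ1 p.1 p.2.1 p.2.2.1 p.2.2.2) (t,x,U,H) e3
          = H * fderiv ℝ (fun p : E4 => Λ2 p.1 p.2.1 p.2.2.1 p.2.2.2) (t,x,U,H) e4 := by
      intro t x U H hH
      have h := (hyp t x U H hH).2.1
      have r1 : pU Λ1 t x U H
          = fderiv ℝ (fun p : E4 => Λ1 p.1 p.2.1 p.2.2.1 p.2.2.2) (t,x,U,H) e3 :=
        (hasDerivAt_lineU _ t x U H (diffAt _ hΛ1 hH)).deriv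
      have r2 : pH Λ2 t x U H
          = fderiv ℝ (fun p : E4 => Λ2 p.1 p.2.1 p.2.2.1 p.2.2.2) (t,x,U,H) e4 :=
        (hasDerivAt_lineH _ t x U H (diffAt _ hΛ2 hH)).deriv
      rw [r1, r2] at h
      linarith
    have hdC : ∀ t x U H : ℝ, 0 < H →
        fderiv ℝ (fun p : E4 => Λ2 p.1 p.2.1 p.2.2.1 p.2.2.2) (t,x,U,H) e1
          + U * fderiv ℝ (fun p : E4 => Λ2 p.1 p.2.1 p.2.2.1 p.2.2.2) (t,x,U,H) e2
          + fderiv ℝ (fun p : E4 => Λ1 p.1 p.2.1 p.2.2.1 p.2.2.2) (t,x,U,H) e2 = 0 := by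
      intro t x U H hH
      have h := (hyp t x U H hH).2.2.1
      have r1 : pT Λ2 t x U H
          = fderiv ℝ (fun p : E4 => Λ2 p.1 p.2.1 p.2.2.1 p.2.2.2) (t,x,U,H) e1 :=
        (hasDerivAt_lineT _ t x U H (diffAt _ hΛ2 hH)).deriv
      have r2 : pX Λ2 t x U H
          = fderiv ℝ (fun p : E4 => Λ2 p.1 p.2.1 p.2.2.1 p.2.2.2) (t,x,U,H) e2 :=
        (hasDerivAt_lineX _ t x U H (diffAt _ hΛ2 hH)).deriv
      have r3 : pX Λ1 t x U H
          = fderiv ℝ (fun p : E4 => Λ1 p.1 p.2.1 p.2.2.1 p.2.2.2) (t,x,U,H) e2 :=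
        (hasDerivAt_lineX _ t x U H (diffAt _ hΛ1 hH)).deriv
      rw [r1, r2, r3] at h
      linarith
    have hdD : ∀ t x U H : ℝ, 0 < H →
        fderiv ℝ (fun p : E4 => Λ1 p.1 p.2.1 p.2.2.1 p.2.2.2) (t,x,U,H) e1
          + U * fderiv ℝ (fun p : E4 => Λ1 p.1 p.2.1 p.2.2.1 p.2.2.2) (t,x,U,H) e2
          + H * fderiv ℝ (fun p : E4 => Λ2 p.1 p.2.1 p.2.2.1 p.2.2.2) (t,x,U,H) e2 = 0 := by
      intro t x U H hH
      have h := (hyp t x U H hH).2.2.2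
      have r1 : pT Λ1 t x U H
          = fderiv ℝ (fun p : E4 => Λ1 p.1 p.2.1 p.2.2.1 p.2.2.2) (t,x,U,H) e1 :=
        (hasDerivAt_lineT _ t x U H (diffAt _ hΛ1 hH)).deriv
      have r2 : pX Λ1 t x U H
          = fderiv ℝ (fun p : E4 => Λ1 p.1 p.2.1 p.2.2.1 p.2.2.2) (t,x,U,H) e2 :=
        (hasDerivAt_lineX _ t x U H (diffAt _ hΛ1 hH)).deriv
      have r3 : pX Λ2 t x U H
          = fderiv ℝ (fun p : E4 => Λ2 p.1 p.2.1 p.2.2.1 p.2.2.2) (t,x,U,H) e2 :=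
        (hasDerivAt_lineX _ t x U H (diffAt _ hΛ2 hH)).deriv
      rw [r1, r2, r3] at h
      linarith
    have key := swm_forward (fun p : E4 => Λ1 p.1 p.2.1 p.2.2.1 p.2.2.2)
      (fun p : E4 => Λ2 p.1 p.2.1 p.2.2.1 p.2.2.2) hΛ1 hΛ2 hdA hdB hdC hdD
    refine ⟨fderiv ℝ (fun p : E4 => Λ2 p.1 p.2.1 p.2.2.1 p.2.2.2) ((0:ℝ),(0:ℝ),(0:ℝ),(1:ℝ)) e2,
      fun U H => Λ1 0 0 U H, fun U H => Λ2 0 0 U H, ?_, ?_, ?_, ?_⟩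
    · have hg : ContDiff ℝ (⊤ : ℕ∞) (fun p : ℝ × ℝ => (((0:ℝ),(0:ℝ),p.1,p.2) : E4)) :=
        contDiff_const.prodMk (contDiff_const.prodMk contDiff_id)
      exact hΛ1.comp hg.contDiffOn (fun p hp => hp)
    · have hg : ContDiff ℝ (⊤ : ℕ∞) (fun p : ℝ × ℝ => (((0:ℝ),(0:ℝ),p.1,p.2) : E4)) :=
        contDiff_const.prodMk (contDiff_const.prodMk contDiff_id)
      exact hΛ2.comp hg.contDiffOn (fun p hp => hp)
    · intro U H hH
      obtain ⟨d1, d2, _, _⟩ := hyp 0 0 U H hH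
      exact ⟨d1, d2⟩
    · intro t x U H hH
      exact ⟨(key t x U H hH).1, (key t x U H hH).2⟩
  · -- reverse direction
    rintro ⟨c₁, lam1, lam2, hl1, hl2, hcond, hform⟩
    intro t x U H hH
    have hpT1 : pT Λ1 t x U H = -(c₁ * H) := by
      show deriv (fun s => Λ1 s x U H) t = -(c₁ * H)
      rw [show (fun s => Λ1 s x U H) = (fun s : ℝ => -c₁ * s * H + lam1 U H) from
        funext fun s => (hform s x U H hH).1]
      have hd : HasDerivAt (fun s : ℝ => -c₁ * s * H + lam1 U H) (-(c₁ * H)) t := by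
        have h := (((hasDerivAt_id t).const_mul (-c₁)).mul_const H).add_const (lam1 U H)
        simpa using h
      exact hd.deriv
    have hpX1 : pX Λ1 t x U H = 0 := by
      show deriv (fun s => Λ1 t s U H) x = 0
      rw [show (fun s => Λ1 t s U H) = (fun _ : ℝ => -c₁ * t * H + lam1 U H) from
        funext fun s => (hform t s U H hH).1]
      exact deriv_const x _
    have hpU1 : pU Λ1 t x U H = qU lam1 U H := by
      show deriv (fun s => Λ1 t x s H) U = qU lam1 U H
      rw [show (fun s => Λ1 t x s H) = (fun s : ℝ => -c₁ * t * H + lam1 s H) from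
        funext fun s => (hform t x s H hH).1]
      rw [deriv_const_add]
      rfl
    have hpH1 : pH Λ1 t x U H = -(c₁ * t) + qH lam1 U H := by
      have heq : (fun s => Λ1 t x U s) =ᶠ[𝓝 H] (fun s : ℝ => -c₁ * t * s + lam1 U s) :=
        Filter.eventually_of_mem (isOpen_Ioi.mem_nhds hH) (fun s hs => (hform t x U s hs).1)
      show deriv (fun s => Λ1 t x U s) H = -(c₁ * t) + qH lam1 U H
      rw [heq.deriv_eq]
      have hd : HasDerivAt (fun s : ℝ => -c₁ * t * s + lam1 U s)
          (-(c₁ * t) + qH lam1 U H) H := by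
        have h := ((hasDerivAt_id H).const_mul (-c₁ * t)).add
          (diff_slice_H lam1 hl1 U H hH).hasDerivAt
        simpa [qH, Pi.add_def] using h
      exact hd.deriv
    have hpT2 : pT Λ2 t x U H = -(c₁ * U) := by
      show deriv (fun s => Λ2 s x U H) t = -(c₁ * U)
      rw [show (fun s => Λ2 s x U H) = (fun s : ℝ => c₁ * (x - s * U) + lam2 U H) from
        funext fun s => (hform s x U H hH).2]
      have hd : HasDerivAt (fun s : ℝ => c₁ * (x - s * U) + lam2 U H) (-(c₁ * U)) t := by
        have h := ((((hasDerivAt_id t).mul_const U).const_sub x).const_mul c₁).add_const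
          (lam2 U H)
        simpa using h
      exact hd.deriv
    have hpX2 : pX Λ2 t x U H = c₁ := by
      show deriv (fun s => Λ2 t s U H) x = c₁
      rw [show (fun s => Λ2 t s U H) = (fun s : ℝ => c₁ * (s - t * U) + lam2 U H) from
        funext fun s => (hform t s U H hH).2]
      have hd : HasDerivAt (fun s : ℝ => c₁ * (s - t * U) + lam2 U H) c₁ x := by
        have h := (((hasDerivAt_id x).sub_const (t * U)).const_mul c₁).add_const (lam2 U H)
        simpa using h
      exact hd.deriv
    have hpU2 : pU Λ2 t x U H = -(c₁ * t) + qU lam2 U H := by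
      show deriv (fun s => Λ2 t x s H) U = -(c₁ * t) + qU lam2 U H
      rw [show (fun s => Λ2 t x s H) = (fun s : ℝ => c₁ * (x - t * s) + lam2 s H) from
        funext fun s => (hform t x s H hH).2]
      have hd : HasDerivAt (fun s : ℝ => c₁ * (x - t * s) + lam2 s H)
          (-(c₁ * t) + qU lam2 U H) U := by
        have h := ((((hasDerivAt_id U).const_mul t).const_sub x).const_mul c₁).add
          (diff_slice_U lam2 hl2 U H hH).hasDerivAt
        simpa [qU, Pi.add_def] using h
      exact hd.deriv
    have hpH2 : pH Λ2 t x U H = qH lam2 U H := by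
      have heq : (fun s => Λ2 t x U s) =ᶠ[𝓝 H] (fun s : ℝ => c₁ * (x - t * U) + lam2 U s) :=
        Filter.eventually_of_mem (isOpen_Ioi.mem_nhds hH) (fun s hs => (hform t x U s hs).2)
      show deriv (fun s => Λ2 t x U s) H = qH lam2 U H
      rw [heq.deriv_eq, deriv_const_add]
      rfl
    refine ⟨?_, ?_, ?_, ?_⟩
    · rw [hpH1, hpU2]
      have h := (hcond U H hH).1
      linarith
    · rw [hpU1, hpH2]
      exact (hcond U H hH).2
    · rw [hpT2, hpX2, hpX1]
      ring
    · rw [hpT1, hpX1, hpX2]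
      ring
end

section
/- Let c₁, c₂ ∈ ℝ, let g : ℝ → ℝ be smooth with antiderivative G (G' = g), and let u, h : ℝ² → ℝ be smooth functions of (t,x) such that c₁·h(t,x) + c₂ ≠ 0 for all (t,x) and such that u and h satisfy the dissipative shallow-water system u_t + u·u_x + h_x = (g(u_x)/(c₁·h + c₂))·u_xx and h_t + u·h_x + h·u_x = 0 on ℝ². Then the conservation law ∂_t(c₁·h·u + c₂·u) + ∂_x(½c₁·h² + ½c₂·u² + c₁·h·u² + c₂·h − G(u_x)) = 0 holds identically on ℝ². -/
/-- Partial derivative with respect to the first variable (time). -/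
noncomputable def pdt (f : ℝ → ℝ → ℝ) (t x : ℝ) : ℝ := deriv (fun s => f s x) t

/-- Partial derivative with respect to the second variable (space). -/
noncomputable def pdx (f : ℝ → ℝ → ℝ) (t x : ℝ) : ℝ := deriv (fun s => f t s) x

lemma sliceX {f : ℝ → ℝ → ℝ} (hf : ContDiff ℝ (⊤ : ℕ∞) (Function.uncurry f)) (t : ℝ) :
    ContDiff ℝ (⊤ : ℕ∞) (f t) := hf.comp (ContDiff.prodMk contDiff_const contDiff_id)

lemma sliceT {f : ℝ → ℝ → ℝ} (hf : ContDiff ℝ (⊤ : ℕ∞) (Function.uncurry f)) (x : ℝ) :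
    ContDiff ℝ (⊤ : ℕ∞) (fun s => f s x) := hf.comp (ContDiff.prodMk contDiff_id contDiff_const)

/-- For the dissipative shallow-water system with F = g(u_x)/(c₁h + c₂), the conservation law
∂_t(c₁hu + c₂u) + ∂_x(½c₁h² + ½c₂u² + c₁hu² + c₂h − G(u_x)) = 0 holds for every smooth
solution, where G is an antiderivative of g. -/
theorem dissipative_shallow_water_momentum_type_conservation_law
    (c₁ c₂ : ℝ) (g G : ℝ → ℝ)
    (hg : ContDiff ℝ (⊤ : ℕ∞) g)
    (hG : ∀ y : ℝ, HasDerivAt G (g y) y)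
    (u h : ℝ → ℝ → ℝ)
    (hu : ContDiff ℝ (⊤ : ℕ∞) (Function.uncurry u))
    (hh : ContDiff ℝ (⊤ : ℕ∞) (Function.uncurry h))
    (hne : ∀ t x : ℝ, c₁ * h t x + c₂ ≠ 0)
    (eq1 : ∀ t x : ℝ, pdt u t x + u t x * pdx u t x + pdx h t x
      = (g (pdx u t x) / (c₁ * h t x + c₂)) * pdx (pdx u) t x)
    (eq2 : ∀ t x : ℝ, pdt h t x + u t x * pdx h t x + h t x * pdx u t x = 0) :
    ∀ t x : ℝ,
      pdt (fun t x => c₁ * h t x * u t x + c₂ * u t x) t x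
        + pdx (fun t x => (1 / 2) * c₁ * h t x ^ 2 + (1 / 2) * c₂ * u t x ^ 2
            + c₁ * h t x * u t x ^ 2 + c₂ * h t x - G (pdx u t x)) t x = 0 := by
  intro t x
  -- time-slice derivatives
  have dUt : HasDerivAt (fun s => u s x) (pdt u t x) t :=
    (((sliceT hu x).differentiable (by simp)) t).hasDerivAt
  have dHt : HasDerivAt (fun s => h s x) (pdt h t x) t :=
    (((sliceT hh x).differentiable (by simp)) t).hasDerivAt
  -- space-slice derivatives
  have hut : ContDiff ℝ (⊤ : ℕ∞) (u t) := sliceX hu t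
  have hht : ContDiff ℝ (⊤ : ℕ∞) (h t) := sliceX hh t
  have hux : ContDiff ℝ ((⊤ : ℕ∞) : WithTop ℕ∞) (deriv (u t)) := (contDiff_infty_iff_deriv.mp (hut.of_le (by simp))).2
  have dUx : HasDerivAt (u t) (pdx u t x) x :=
    ((hut.differentiable (by simp)) x).hasDerivAt
  have dHx : HasDerivAt (h t) (pdx h t x) x :=
    ((hht.differentiable (by simp)) x).hasDerivAt
  have dUxx : HasDerivAt (deriv (u t)) (pdx (pdx u) t x) x :=
    ((hux.differentiable (by simp)) x).hasDerivAt
  have dG : HasDerivAt (fun s => G (deriv (u t) s))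
      (g (pdx u t x) * pdx (pdx u) t x) x :=
    (hG (deriv (u t) x)).comp x dUxx
  -- total time derivative
  have D1 : HasDerivAt (fun s => c₁ * h s x * u s x + c₂ * u s x)
      (c₁ * pdt h t x * u t x + c₁ * h t x * pdt u t x + c₂ * pdt u t x) t := by
    have := ((dHt.const_mul c₁).mul dUt).add (dUt.const_mul c₂)
    convert this using 1 <;> first | rfl | ring
  -- total space derivative
  have D2 : HasDerivAt (fun s => (1 / 2) * c₁ * h t s ^ 2 + (1 / 2) * c₂ * u t s ^ 2
        + c₁ * h t s * u t s ^ 2 + c₂ * h t s - G (deriv (u t) s))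
      (c₁ * h t x * pdx h t x + c₂ * u t x * pdx u t x
        + c₁ * (pdx h t x * u t x ^ 2 + h t x * (2 * u t x * pdx u t x))
        + c₂ * pdx h t x - g (pdx u t x) * pdx (pdx u) t x) x := by
    have := (((((dHx.pow 2).const_mul ((1 : ℝ) / 2 * c₁)).add
        ((dUx.pow 2).const_mul ((1 : ℝ) / 2 * c₂))).add
        (((dHx.const_mul c₁).mul (dUx.pow 2)))).add
        (dHx.const_mul c₂)).sub dG
    convert this using 1 <;> first | rfl | (simp only [Pi.pow_apply, Nat.cast_ofNat]; ring)
  have E1 := D1.deriv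
  have E2 := D2.deriv
  have key : pdt (fun t x => c₁ * h t x * u t x + c₂ * u t x) t x
      = c₁ * pdt h t x * u t x + c₁ * h t x * pdt u t x + c₂ * pdt u t x := E1
  have key2 : pdx (fun t x => (1 / 2) * c₁ * h t x ^ 2 + (1 / 2) * c₂ * u t x ^ 2
        + c₁ * h t x * u t x ^ 2 + c₂ * h t x - G (pdx u t x)) t x
      = c₁ * h t x * pdx h t x + c₂ * u t x * pdx u t x
        + c₁ * (pdx h t x * u t x ^ 2 + h t x * (2 * u t x * pdx u t x))
        + c₂ * pdx h t x - g (pdx u t x) * pdx (pdx u) t x := E2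
  rw [key, key2]
  have e1 := eq1 t x
  have e2 := eq2 t x
  have hn := hne t x
  field_simp at e1
  linear_combination e1 + c₁ * u t x * e2
end

section
/- Let c₁, c₂ ∈ ℝ and let u, h : ℝ² → ℝ be smooth functions of (t,x) with h(t,x) > 0, u_x(t,x) ≠ 0 and c₁·h(t,x) + c₂ ≠ 0 for all (t,x), satisfying the dissipative shallow-water system u_t + u·u_x + h_x = u_xx/((c₁·h + c₂)·u_x²) and h_t + u·h_x + h·u_x = 0 on ℝ². Then the conservation law ∂_t(½(c₁·h + c₂)·u² + c₂·(h·ln h − h) + ½c₁·h² − t) + ∂_x(½c₁·h·u³ + ⅓c₂·u³ + c₂·h·u·ln h + c₁·h²·u + u/u_x) = 0 holds identically on ℝ². -/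
/-- For the dissipative shallow-water system with F = 1/((c₁h + c₂)·u_x²), the
energy-type conservation law
∂_t(½(c₁h + c₂)u² + c₂(h ln h − h) + ½c₁h² − t)
  + ∂_x(½c₁hu³ + ⅓c₂u³ + c₂hu ln h + c₁h²u + u/u_x) = 0
holds for every smooth solution with h > 0, u_x ≠ 0 and c₁h + c₂ ≠ 0. -/
theorem dissipative_shallow_water_energy_type_conservation_law
    (c₁ c₂ : ℝ)
    (u h : ℝ → ℝ → ℝ)
    (hu : ContDiff ℝ (⊤ : ℕ∞) (Function.uncurry u))
    (hh : ContDiff ℝ (⊤ : ℕ∞) (Function.uncurry h))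
    (hpos : ∀ t x : ℝ, 0 < h t x)
    (hux : ∀ t x : ℝ, pdx u t x ≠ 0)
    (hne : ∀ t x : ℝ, c₁ * h t x + c₂ ≠ 0)
    (eq1 : ∀ t x : ℝ, pdt u t x + u t x * pdx u t x + pdx h t x
      = pdx (pdx u) t x / ((c₁ * h t x + c₂) * (pdx u t x) ^ 2))
    (eq2 : ∀ t x : ℝ, pdt h t x + u t x * pdx h t x + h t x * pdx u t x = 0) :
    ∀ t x : ℝ,
      pdt (fun t x => (1 / 2) * (c₁ * h t x + c₂) * u t x ^ 2
          + c₂ * (h t x * Real.log (h t x) - h t x) + (1 / 2) * c₁ * h t x ^ 2 - t) t x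
        + pdx (fun t x => (1 / 2) * c₁ * h t x * u t x ^ 3 + (1 / 3) * c₂ * u t x ^ 3
            + c₂ * h t x * u t x * Real.log (h t x) + c₁ * h t x ^ 2 * u t x
            + u t x / pdx u t x) t x = 0 := by

  intro t x
  -- slice smoothness
  have htu : ContDiff ℝ (⊤ : ℕ∞) (fun s : ℝ => u s x) := hu.comp (ContDiff.prodMk contDiff_id contDiff_const)
  have hth : ContDiff ℝ (⊤ : ℕ∞) (fun s : ℝ => h s x) := hh.comp (ContDiff.prodMk contDiff_id contDiff_const)
  have hxu : ContDiff ℝ (⊤ : ℕ∞) (fun y : ℝ => u t y) := hu.comp (ContDiff.prodMk contDiff_const contDiff_id)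
  have hxh : ContDiff ℝ (⊤ : ℕ∞) (fun y : ℝ => h t y) := hh.comp (ContDiff.prodMk contDiff_const contDiff_id)
  have hu1 : HasDerivAt (fun s => u s x) (pdt u t x) t :=
    ((htu.differentiable (by simp)) t).hasDerivAt
  have hh1 : HasDerivAt (fun s => h s x) (pdt h t x) t :=
    ((hth.differentiable (by simp)) t).hasDerivAt
  have hu2 : HasDerivAt (fun y => u t y) (pdx u t x) x :=
    ((hxu.differentiable (by simp)) x).hasDerivAt
  have hh2 : HasDerivAt (fun y => h t y) (pdx h t x) x :=
    ((hxh.differentiable (by simp)) x).hasDerivAt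
  have hxu' : ContDiff ℝ ((⊤ : ℕ∞) : WithTop ℕ∞) (fun y : ℝ => u t y) := hxu.of_le (by simp)
  have hdux : Differentiable ℝ (fun y : ℝ => pdx u t y) :=
    ((contDiff_infty_iff_deriv.mp hxu').2).differentiable (by simp)
  have huxx : HasDerivAt (fun y => pdx u t y) (pdx (pdx u) t x) x :=
    (hdux x).hasDerivAt
  have hne' : h t x ≠ 0 := (hpos t x).ne'
  -- t-derivative of density
  have A := (((((hh1.const_mul c₁).add_const c₂).const_mul ((1:ℝ)/2)).mul (hu1.pow 2)).add
      (((hh1.mul (hh1.log hne')).sub hh1).const_mul c₂) |>.add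
      ((hh1.pow 2).const_mul ((1/2)*c₁))).sub (hasDerivAt_id t)
  have e1 : pdt (fun t x => (1 / 2) * (c₁ * h t x + c₂) * u t x ^ 2
          + c₂ * (h t x * Real.log (h t x) - h t x) + (1 / 2) * c₁ * h t x ^ 2 - t) t x = _ :=
    A.deriv
  -- x-derivative of flux
  have B := (((((hh2.const_mul ((1/2)*c₁)).mul (hu2.pow 3)).add
      ((hu2.pow 3).const_mul ((1/3)*c₂))).add
      (((hh2.const_mul c₂).mul hu2).mul (hh2.log hne'))).add
      (((hh2.pow 2).const_mul c₁).mul hu2)).add (hu2.div huxx (hux t x))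
  have e2 : pdx (fun t x => (1 / 2) * c₁ * h t x * u t x ^ 3 + (1 / 3) * c₂ * u t x ^ 3
            + c₂ * h t x * u t x * Real.log (h t x) + c₁ * h t x ^ 2 * u t x
            + u t x / pdx u t x) t x = _ := B.deriv
  rw [e1, e2]
  have hD : (c₁ * h t x + c₂) * pdx u t x ^ 2 ≠ 0 :=
    mul_ne_zero (hne t x) (pow_ne_zero 2 (hux t x))
  have E1 := eq1 t x
  set w := pdx (pdx u) t x / ((c₁ * h t x + c₂) * pdx u t x ^ 2) with hw
  have euxx : pdx (pdx u) t x = w * ((c₁ * h t x + c₂) * pdx u t x ^ 2) := by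
    rw [hw, div_mul_cancel₀ _ hD]
  have e3 : pdt u t x = w - u t x * pdx u t x - pdx h t x := by linarith
  have e4 : pdt h t x = -(u t x * pdx h t x) - h t x * pdx u t x := by linarith [eq2 t x]
  rw [euxx, e3, e4]
  field_simp [hux t x, hne']
  simp only [Pi.pow_apply, Pi.mul_apply]
  ring
end

section
/- Let g : ℝ → ℝ be smooth with antiderivative G (G' = g), and let u, h : ℝ² → ℝ be smooth functions of (t,x) with h(t,x) ≠ 0 for all (t,x), satisfying the dissipative shallow-water system u_t + u·u_x + h_x = (g(u_x)/h)·u_xx and h_t + u·h_x + h·u_x = 0 on ℝ². Then the explicitly (t,x)-dependent conservation law ∂_t(x·h − t·h·u) + ∂_x(x·h·u − t·h·u² − ½t·h² + t·G(u_x)) = 0 holds identically on ℝ². -/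
/-- For the dissipative shallow-water system with F = g(u_x)/h, the explicitly
(t,x)-dependent conservation law
∂_t(xh − thu) + ∂_x(xhu − thu² − ½th² + tG(u_x)) = 0 holds for every smooth solution
with h ≠ 0, where G is an antiderivative of g. -/
theorem dissipative_shallow_water_tx_dependent_conservation_law
    (g G : ℝ → ℝ)
    (hg : ContDiff ℝ (⊤ : ℕ∞) g)
    (hG : ∀ y : ℝ, HasDerivAt G (g y) y)
    (u h : ℝ → ℝ → ℝ)
    (hu : ContDiff ℝ (⊤ : ℕ∞) (Function.uncurry u))
    (hh : ContDiff ℝ (⊤ : ℕ∞) (Function.uncurry h))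
    (hne : ∀ t x : ℝ, h t x ≠ 0)
    (eq1 : ∀ t x : ℝ, pdt u t x + u t x * pdx u t x + pdx h t x
      = (g (pdx u t x) / h t x) * pdx (pdx u) t x)
    (eq2 : ∀ t x : ℝ, pdt h t x + u t x * pdx h t x + h t x * pdx u t x = 0) :
    ∀ t x : ℝ,
      pdt (fun t x => x * h t x - t * h t x * u t x) t x
        + pdx (fun t x => x * h t x * u t x - t * h t x * u t x ^ 2
            - (1 / 2) * t * h t x ^ 2 + t * G (pdx u t x)) t x = 0 := by
  intro t x
  have hut : HasDerivAt (fun s => u s x) (pdt u t x) t :=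
    (((hu.differentiable (by simp)).comp
      (Differentiable.prodMk differentiable_id (differentiable_const x))).differentiableAt).hasDerivAt
  have hht : HasDerivAt (fun s => h s x) (pdt h t x) t :=
    (((hh.differentiable (by simp)).comp
      (Differentiable.prodMk differentiable_id (differentiable_const x))).differentiableAt).hasDerivAt
  have hux : HasDerivAt (fun s => u t s) (pdx u t x) x :=
    (((hu.differentiable (by simp)).comp
      (Differentiable.prodMk (differentiable_const t) differentiable_id)).differentiableAt).hasDerivAt
  have hhx : HasDerivAt (fun s => h t s) (pdx h t x) x :=
    (((hh.differentiable (by simp)).comp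
      (Differentiable.prodMk (differentiable_const t) differentiable_id)).differentiableAt).hasDerivAt
  have hslice : ContDiff ℝ (⊤ : ℕ∞) (fun s => u t s) :=
    hu.comp (ContDiff.prodMk contDiff_const contDiff_id)
  have hderiv : Differentiable ℝ (deriv (fun s => u t s)) :=
    ((contDiff_infty_iff_deriv.mp (hslice.of_le (by simp))).2).differentiable (by simp)
  have huxx : HasDerivAt (fun s => pdx u t s) (pdx (pdx u) t x) x :=
    (hderiv.differentiableAt).hasDerivAt
  have Hρ := (hht.const_mul x).sub (((hasDerivAt_id' t).mul hht).mul hut)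
  have HG : HasDerivAt (fun s => G (pdx u t s)) (g (pdx u t x) * pdx (pdx u) t x) x :=
    (hG (pdx u t x)).comp x huxx
  have HX := ((((hasDerivAt_id' x).mul hhx).mul hux).sub
      ((hhx.const_mul t).mul (hux.pow 2)) |>.sub
      ((hhx.pow 2).const_mul ((1 / 2) * t))).add (HG.const_mul t)
  have E2 := eq2 t x
  have hx0 := hne t x
  have E1' : h t x * pdt u t x + h t x * (u t x * pdx u t x) + h t x * pdx h t x
      = g (pdx u t x) * pdx (pdx u) t x := by
    have E1 := eq1 t x
    field_simp at E1
    linarith [E1]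
  have Dρ : pdt (fun t x => x * h t x - t * h t x * u t x) t x = _ := Hρ.deriv
  have DX : pdx (fun t x => x * h t x * u t x - t * h t x * u t x ^ 2
      - (1 / 2) * t * h t x ^ 2 + t * G (pdx u t x)) t x = _ := HX.deriv
  rw [Dρ, DX]
  simp only [Pi.mul_apply, Pi.pow_apply]
  linear_combination (x - t * u t x) * E2 - t * E1'
end

section
/- Let u, h : ℝ² → ℝ be smooth functions of (t,x) with h(t,x) ≠ 0 and u_x(t,x) ≠ 0 for all (t,x), satisfying the dissipative shallow-water system u_t + u·u_x + h_x = u_xx/(h·u_x²) and h_t + u·h_x + h·u_x = 0 on ℝ². Then the energy conservation law ∂_t(½h·u² + ½h² − t) + ∂_x(½h·u³ + h²·u + u/u_x) = 0 holds identically on ℝ². -/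
lemma slice_t_diff {f : ℝ → ℝ → ℝ} (hf : ContDiff ℝ (⊤ : ℕ∞) (Function.uncurry f)) (t x : ℝ) :
    DifferentiableAt ℝ (fun s => f s x) t := by
  have : (fun s => f s x) = (Function.uncurry f) ∘ (fun s => (s, x)) := rfl
  rw [this]
  exact ((hf.differentiable (by simp)).comp (differentiable_id.prodMk (differentiable_const x))).differentiableAt

lemma slice_x_diff {f : ℝ → ℝ → ℝ} (hf : ContDiff ℝ (⊤ : ℕ∞) (Function.uncurry f)) (t x : ℝ) :
    DifferentiableAt ℝ (fun s => f t s) x := by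
  have : (fun s => f t s) = (Function.uncurry f) ∘ (fun s => (t, s)) := rfl
  rw [this]
  exact ((hf.differentiable (by simp)).comp ((differentiable_const t).prodMk differentiable_id)).differentiableAt

lemma pdx_eq_fderiv {f : ℝ → ℝ → ℝ} (hf : ContDiff ℝ (⊤ : ℕ∞) (Function.uncurry f)) (t x : ℝ) :
    pdx f t x = fderiv ℝ (Function.uncurry f) (t, x) (0, 1) := by
  have h1 : HasDerivAt (fun s => (t, s)) ((0 : ℝ), (1 : ℝ)) x :=
    (hasDerivAt_const x t).prodMk (hasDerivAt_id x)
  have h2 := ((hf.differentiable (by simp) (t, x)).hasFDerivAt).comp_hasDerivAt x h1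
  exact h2.deriv

lemma smooth_pdx {f : ℝ → ℝ → ℝ} (hf : ContDiff ℝ (⊤ : ℕ∞) (Function.uncurry f)) :
    ContDiff ℝ (⊤ : ℕ∞) (Function.uncurry (pdx f)) := by
  have : Function.uncurry (pdx f) = fun p : ℝ × ℝ => fderiv ℝ (Function.uncurry f) p (0, 1) := by
    funext p
    exact pdx_eq_fderiv hf p.1 p.2
  rw [this]
  exact (hf.fderiv_right (by simp)).clm_apply contDiff_const

/-- For the dissipative shallow-water system with F = 1/(h·u_x²), the energy
conservation law ∂_t(½hu² + ½h² − t) + ∂_x(½hu³ + h²u + u/u_x) = 0 holds for every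
smooth solution with h ≠ 0 and u_x ≠ 0. -/
theorem dissipative_shallow_water_energy_conservation_law
    (u h : ℝ → ℝ → ℝ)
    (hu : ContDiff ℝ (⊤ : ℕ∞) (Function.uncurry u))
    (hh : ContDiff ℝ (⊤ : ℕ∞) (Function.uncurry h))
    (hne : ∀ t x : ℝ, h t x ≠ 0)
    (hux : ∀ t x : ℝ, pdx u t x ≠ 0)
    (eq1 : ∀ t x : ℝ, pdt u t x + u t x * pdx u t x + pdx h t x
      = pdx (pdx u) t x / (h t x * (pdx u t x) ^ 2))
    (eq2 : ∀ t x : ℝ, pdt h t x + u t x * pdx h t x + h t x * pdx u t x = 0) :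
    ∀ t x : ℝ,
      pdt (fun t x => (1 / 2) * h t x * u t x ^ 2 + (1 / 2) * h t x ^ 2 - t) t x
        + pdx (fun t x => (1 / 2) * h t x * u t x ^ 3 + h t x ^ 2 * u t x
            + u t x / pdx u t x) t x = 0 := by
  intro t x
  have hut : HasDerivAt (fun s => u s x) (pdt u t x) t := (slice_t_diff hu t x).hasDerivAt
  have hht : HasDerivAt (fun s => h s x) (pdt h t x) t := (slice_t_diff hh t x).hasDerivAt
  have huxx : HasDerivAt (fun s => u t s) (pdx u t x) x := (slice_x_diff hu t x).hasDerivAt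
  have hhx : HasDerivAt (fun s => h t s) (pdx h t x) x := (slice_x_diff hh t x).hasDerivAt
  have hwx : HasDerivAt (fun s => pdx u t s) (pdx (pdx u) t x) x :=
    (slice_x_diff (smooth_pdx hu) t x).hasDerivAt
  -- time derivative
  have HT : HasDerivAt (fun s => (1 / 2) * h s x * u s x ^ 2 + (1 / 2) * h s x ^ 2 - s)
      ((1/2) * pdt h t x * u t x ^ 2 + (1/2) * h t x * (2 * u t x ^ 1 * pdt u t x)
        + (1/2) * (2 * h t x ^ 1 * pdt h t x) - 1) t := by
    exact ((((hasDerivAt_const t (1/2:ℝ)).mul hht).mul (hut.pow 2)).add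
      ((hasDerivAt_const t (1/2:ℝ)).mul (hht.pow 2))).sub (hasDerivAt_id t) |>.congr_deriv (by simp only [Pi.mul_apply, Pi.pow_apply]; ring)
  have HX : HasDerivAt (fun s => (1 / 2) * h t s * u t s ^ 3 + h t s ^ 2 * u t s
      + u t s / pdx u t s)
      ((1/2) * pdx h t x * u t x ^ 3 + (1/2) * h t x * (3 * u t x ^ 2 * pdx u t x)
        + ((2 * h t x ^ 1 * pdx h t x) * u t x + h t x ^ 2 * pdx u t x)
        + (pdx u t x * pdx u t x - u t x * pdx (pdx u) t x) / (pdx u t x) ^ 2) x := by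
    exact ((((hasDerivAt_const x (1/2:ℝ)).mul hhx).mul (huxx.pow 3)).add
      ((hhx.pow 2).mul huxx)).add (huxx.div hwx (hux t x)) |>.congr_deriv (by simp only [Pi.mul_apply, Pi.pow_apply]; ring)
  have e1 : pdx (pdx u) t x
      = (pdt u t x + u t x * pdx u t x + pdx h t x) * (h t x * (pdx u t x) ^ 2) := by
    have h1 := eq1 t x
    field_simp [hne t x, hux t x] at h1
    linarith [h1]
  have e2 : pdt h t x = -(u t x * pdx h t x) - h t x * pdx u t x := by linarith [eq2 t x]
  show deriv (fun s => (1 / 2) * h s x * u s x ^ 2 + (1 / 2) * h s x ^ 2 - s) t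
    + deriv (fun s => (1 / 2) * h t s * u t s ^ 3 + h t s ^ 2 * u t s + u t s / pdx u t s) x = 0
  rw [HT.deriv, HX.deriv, e1, e2]
  field_simp [hux t x]
  ring
end

section
/- Let Λ¹, Λ² : ℝ⁴ → ℝ be smooth functions of (t,x,U,H). Suppose that for every smooth function F : ℝ³ → ℝ of (H,U_x,H_x) the following equations hold identically for all (t,x,U,H,U_x,H_x): Λ¹_H − Λ²_U = 0; Λ¹_U − H·Λ²_H = 0; Λ¹_x + U·Λ²_x + Λ²_t = 0; and Λ¹·F_{H_x} = 0 (where F_{H_x} denotes ∂F/∂H_x evaluated at (H,U_x,H_x)). Then Λ¹ is identically zero and Λ² is a constant function. -/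
/-- If smooth multipliers Λ¹(t,x,U,H), Λ²(t,x,U,H) satisfy the determining equations of
conservation-law multipliers of the class of dissipative shallow-water equations for every
smooth constitutive function F(H,U_x,H_x), then Λ¹ ≡ 0 and Λ² is constant: for arbitrary F
the only admitted conservation law of the class is conservation of mass. -/
theorem dissipative_shallow_water_arbitrary_F_only_mass
    (Λ1 Λ2 : ℝ → ℝ → ℝ → ℝ → ℝ)
    (hΛ1 : ContDiff ℝ (⊤ : ℕ∞) (fun p : ℝ × ℝ × ℝ × ℝ => Λ1 p.1 p.2.1 p.2.2.1 p.2.2.2))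
    (hΛ2 : ContDiff ℝ (⊤ : ℕ∞) (fun p : ℝ × ℝ × ℝ × ℝ => Λ2 p.1 p.2.1 p.2.2.1 p.2.2.2))
    (hdet : ∀ F : ℝ → ℝ → ℝ → ℝ,
      ContDiff ℝ (⊤ : ℕ∞) (fun p : ℝ × ℝ × ℝ => F p.1 p.2.1 p.2.2) →
      ∀ t x U H Ux Hx : ℝ,
        pH Λ1 t x U H - pU Λ2 t x U H = 0 ∧
        pU Λ1 t x U H - H * pH Λ2 t x U H = 0 ∧
        pX Λ1 t x U H + U * pX Λ2 t x U H + pT Λ2 t x U H = 0 ∧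
        Λ1 t x U H * deriv (fun c => F H Ux c) Hx = 0) :
    (∀ t x U H : ℝ, Λ1 t x U H = 0) ∧
    (∃ k : ℝ, ∀ t x U H : ℝ, Λ2 t x U H = k) := by
  have hFlin : ContDiff ℝ (⊤ : ℕ∞) (fun p : ℝ × ℝ × ℝ => p.2.2) := contDiff_snd.comp contDiff_snd
  have hd := hdet (fun _ _ Hx => Hx) hFlin
  have h1 : ∀ t x U H : ℝ, Λ1 t x U H = 0 := by
    intro t x U H
    have h := (hd t x U H 0 0).2.2.2
    simpa using h
  refine ⟨h1, ?_⟩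
  -- partial derivatives of Λ1 vanish
  have hpH1 : ∀ t x U H, pH Λ1 t x U H = 0 := by
    intro t x U H
    unfold pH
    have : (fun s => Λ1 t x U s) = fun _ => (0:ℝ) := funext fun s => h1 t x U s
    rw [this]; simp
  have hpU1 : ∀ t x U H, pU Λ1 t x U H = 0 := by
    intro t x U H
    unfold pU
    have : (fun s => Λ1 t x s H) = fun _ => (0:ℝ) := funext fun s => h1 t x s H
    rw [this]; simp
  have hpX1 : ∀ t x U H, pX Λ1 t x U H = 0 := by
    intro t x U H
    unfold pX
    have : (fun s => Λ1 t s U H) = fun _ => (0:ℝ) := funext fun s => h1 t s U H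
    rw [this]; simp
  -- Λ2 relations
  have hpU2 : ∀ t x U H, pU Λ2 t x U H = 0 := by
    intro t x U H
    have h := (hd t x U H 0 0).1
    have h' := hpH1 t x U H
    linarith
  have hpH2ne : ∀ t x U H, H ≠ 0 → pH Λ2 t x U H = 0 := by
    intro t x U H hH
    have h := (hd t x U H 0 0).2.1
    have h' := hpU1 t x U H
    have hm : H * pH Λ2 t x U H = 0 := by linarith
    exact (mul_eq_zero.mp hm).resolve_left hH
  -- slices of Λ2 are smooth
  have sliceH : ∀ t x U, ContDiff ℝ (⊤ : ℕ∞) (fun s => Λ2 t x U s) := by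
    intro t x U
    have h : ContDiff ℝ (⊤ : ℕ∞) (fun s : ℝ => (t, x, U, s)) := by fun_prop
    exact hΛ2.comp h
  have sliceU : ∀ t x H, ContDiff ℝ (⊤ : ℕ∞) (fun s => Λ2 t x s H) := by
    intro t x H
    have h : ContDiff ℝ (⊤ : ℕ∞) (fun s : ℝ => (t, x, s, H)) := by fun_prop
    exact hΛ2.comp h
  have sliceX : ∀ t U H, ContDiff ℝ (⊤ : ℕ∞) (fun s => Λ2 t s U H) := by
    intro t U H
    have h : ContDiff ℝ (⊤ : ℕ∞) (fun s : ℝ => (t, s, U, H)) := by fun_prop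
    exact hΛ2.comp h
  have sliceT : ∀ x U H, ContDiff ℝ (⊤ : ℕ∞) (fun s => Λ2 s x U H) := by
    intro x U H
    have h : ContDiff ℝ (⊤ : ℕ∞) (fun s : ℝ => (s, x, U, H)) := by fun_prop
    exact hΛ2.comp h
  -- by continuity of the derivative, pH Λ2 vanishes everywhere
  have hpH2 : ∀ t x U H, pH Λ2 t x U H = 0 := by
    intro t x U H
    rcases eq_or_ne H 0 with rfl | hH
    · have hcont : Continuous (deriv (fun s => Λ2 t x U s)) :=
        (sliceH t x U).continuous_deriv (by simp)
      have t1 : Filter.Tendsto (deriv (fun s => Λ2 t x U s)) (nhdsWithin 0 {(0:ℝ)}ᶜ)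
          (nhds (deriv (fun s => Λ2 t x U s) 0)) :=
        (hcont.continuousAt).continuousWithinAt.tendsto
      have t2 : Filter.Tendsto (deriv (fun s => Λ2 t x U s)) (nhdsWithin 0 {(0:ℝ)}ᶜ)
          (nhds 0) := by
        refine Filter.Tendsto.congr' ?_ tendsto_const_nhds
        filter_upwards [self_mem_nhdsWithin] with s hs
        exact (hpH2ne t x U s hs).symm
      exact tendsto_nhds_unique t1 t2
    · exact hpH2ne t x U H hH
  -- constancy in each variable
  have constH : ∀ t x U H H', Λ2 t x U H = Λ2 t x U H' := by
    intro t x U H H'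
    exact is_const_of_deriv_eq_zero ((sliceH t x U).differentiable (by simp))
      (fun s => hpH2 t x U s) H H'
  have constU : ∀ t x U U' H, Λ2 t x U H = Λ2 t x U' H := by
    intro t x U U' H
    exact is_const_of_deriv_eq_zero ((sliceU t x H).differentiable (by simp))
      (fun s => hpU2 t x s H) U U'
  -- pX and pT do not depend on U
  have hXeq : ∀ t x U U' H, pX Λ2 t x U H = pX Λ2 t x U' H := by
    intro t x U U' H
    unfold pX
    have : (fun s => Λ2 t s U H) = fun s => Λ2 t s U' H :=
      funext fun s => constU t s U U' H
    rw [this]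
  have hTeq : ∀ t x U U' H, pT Λ2 t x U H = pT Λ2 t x U' H := by
    intro t x U U' H
    unfold pT
    have : (fun s => Λ2 s x U H) = fun s => Λ2 s x U' H :=
      funext fun s => constU s x U U' H
    rw [this]
  have hpT2 : ∀ t x U H, pT Λ2 t x U H = 0 := by
    intro t x U H
    have h := (hd t x 0 H 0 0).2.2.1
    have h' := hpX1 t x 0 H
    have : pT Λ2 t x 0 H = 0 := by linarith
    rw [hTeq t x U 0 H]; exact this
  have hpX2 : ∀ t x U H, pX Λ2 t x U H = 0 := by
    intro t x U H
    have h := (hd t x 1 H 0 0).2.2.1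
    have h' := hpX1 t x 1 H
    have h'' := hpT2 t x 1 H
    have : pX Λ2 t x 1 H = 0 := by linarith
    rw [hXeq t x U 1 H]; exact this
  have constX : ∀ t x x' U H, Λ2 t x U H = Λ2 t x' U H := by
    intro t x x' U H
    exact is_const_of_deriv_eq_zero ((sliceX t U H).differentiable (by simp))
      (fun s => hpX2 t s U H) x x'
  have constT : ∀ t t' x U H, Λ2 t x U H = Λ2 t' x U H := by
    intro t t' x U H
    exact is_const_of_deriv_eq_zero ((sliceT x U H).differentiable (by simp))
      (fun s => hpT2 s x U H) t t'
  refine ⟨Λ2 0 0 0 0, fun t x U H => ?_⟩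
  calc Λ2 t x U H = Λ2 t x U 0 := constH t x U H 0
    _ = Λ2 t x 0 0 := constU t x U 0 0
    _ = Λ2 t 0 0 0 := constX t x 0 0 0
    _ = Λ2 0 0 0 0 := constT t 0 0 0 0
end

section
/- Let f¹, f² : ℝ² → ℝ be smooth functions of (u,h) satisfying the compatibility conditions ∂f¹/∂h = ∂f²/∂u and ∂f¹/∂u = h·∂f²/∂h + f² on ℝ². Let Ξ, Φ, Ψ, Θ : ℝ² → ℝ be smooth functions of (u,h) with ∂Ξ/∂u = f¹, ∂Ξ/∂h = f²; ∂Φ/∂u = h·f², ∂Φ/∂h = f¹; ∂Ψ/∂u = h·(f¹ + u·f²), ∂Ψ/∂h = h·f² + u·f¹; ∂Θ/∂u = u·h·f¹ + (½u² + h)·h·f², ∂Θ/∂h = u·h·f² + (½u² + h)·f¹. Let u, h : ℝ² → ℝ be smooth functions of (t,x) satisfying the closed shallow-water system u_t + u·u_x + h_x = f¹(u,h)·u_x + f²(u,h)·h_x and h_t + u·h_x + h·u_x = h·f²(u,h)·u_x + f¹(u,h)·h_x on ℝ². Then the following four conservation laws hold identically on ℝ²: ∂_t(u) + ∂_x(½u²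 + h − Ξ(u,h)) = 0; ∂_t(h) + ∂_x(h·u − Φ(u,h)) = 0; ∂_t(h·u) + ∂_x(h·u² + ½h² − Ψ(u,h)) = 0; ∂_t(½(h·u² + h²)) + ∂_x(½h·u³ + h²·u − Θ(u,h)) = 0. -/
/-- Partial derivative of a function of (u,h) with respect to u. -/
noncomputable def qu (f : ℝ → ℝ → ℝ) (u h : ℝ) : ℝ := deriv (fun s => f s h) u

/-- Partial derivative of a function of (u,h) with respect to h. -/
noncomputable def qh (f : ℝ → ℝ → ℝ) (u h : ℝ) : ℝ := deriv (fun s => f u s) h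

/-- Chain rule for a smooth function of two variables composed with two curves. -/
lemma hasDerivAt_comp2 {F : ℝ → ℝ → ℝ} (hF : ContDiff ℝ (⊤ : ℕ∞) (Function.uncurry F))
    {a b : ℝ → ℝ} {a' b' x : ℝ} (ha : HasDerivAt a a' x) (hb : HasDerivAt b b' x) :
    HasDerivAt (fun s => F (a s) (b s))
      (qu F (a x) (b x) * a' + qh F (a x) (b x) * b') x := by
  have hFd : DifferentiableAt ℝ (Function.uncurry F) (a x, b x) :=
    (hF.differentiable (by simp)) _
  have hL := hFd.hasFDerivAt
  have hcurve : HasDerivAt (fun s => (a s, b s)) (a', b') x := ha.prodMk hb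
  have hcomp := hL.comp_hasDerivAt (x := x) hcurve
  have h1 : HasDerivAt (fun s : ℝ => (s, b x)) ((1:ℝ), (0:ℝ)) (a x) :=
    (hasDerivAt_id (a x)).prodMk (hasDerivAt_const (a x) (b x))
  have h2 : HasDerivAt (fun s : ℝ => (a x, s)) ((0:ℝ), (1:ℝ)) (b x) :=
    (hasDerivAt_const (b x) (a x)).prodMk (hasDerivAt_id (b x))
  have hqu : qu F (a x) (b x)
      = fderiv ℝ (Function.uncurry F) (a x, b x) ((1:ℝ), (0:ℝ)) :=
    by rw [← (hL.comp_hasDerivAt (x := a x) h1).deriv]; rfl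
  have hqh : qh F (a x) (b x)
      = fderiv ℝ (Function.uncurry F) (a x, b x) ((0:ℝ), (1:ℝ)) :=
    by rw [← (hL.comp_hasDerivAt (x := b x) h2).deriv]; rfl
  have hsplit : ((a', b') : ℝ × ℝ) = a' • ((1:ℝ), (0:ℝ)) + b' • ((0:ℝ), (1:ℝ)) := by
    simp [Prod.ext_iff]
  have key : fderiv ℝ (Function.uncurry F) (a x, b x) (a', b')
      = qu F (a x) (b x) * a' + qh F (a x) (b x) * b' := by
    rw [hsplit, map_add, map_smul, map_smul, hqu, hqh, smul_eq_mul, smul_eq_mul]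
    ring
  rw [key] at hcomp
  exact hcomp

/-- The closed shallow-water system with parameterization f = f¹u_x + f²h_x,
g = hf²u_x + f¹h_x, where f¹, f² satisfy the compatibility conditions
f¹_h = f²_u and f¹_u = h·f²_h + f², conserves mass-specific momentum, mass, momentum
and energy, with fluxes corrected by the flux potentials Ξ, Φ, Ψ, Θ. -/

theorem closed_shallow_water_four_conservation_laws
    (f1 f2 Ξ Φ Ψ Θ : ℝ → ℝ → ℝ)
    (hf1 : ContDiff ℝ (⊤ : ℕ∞) (Function.uncurry f1))
    (hf2 : ContDiff ℝ (⊤ : ℕ∞) (Function.uncurry f2))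
    (hΞ : ContDiff ℝ (⊤ : ℕ∞) (Function.uncurry Ξ))
    (hΦ : ContDiff ℝ (⊤ : ℕ∞) (Function.uncurry Φ))
    (hΨ : ContDiff ℝ (⊤ : ℕ∞) (Function.uncurry Ψ))
    (hΘ : ContDiff ℝ (⊤ : ℕ∞) (Function.uncurry Θ))
    (hcomp1 : ∀ a b : ℝ, qh f1 a b = qu f2 a b)
    (hcomp2 : ∀ a b : ℝ, qu f1 a b = b * qh f2 a b + f2 a b)
    (hΞu : ∀ a b : ℝ, qu Ξ a b = f1 a b)
    (hΞh : ∀ a b : ℝ, qh Ξ a b = f2 a b)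
    (hΦu : ∀ a b : ℝ, qu Φ a b = b * f2 a b)
    (hΦh : ∀ a b : ℝ, qh Φ a b = f1 a b)
    (hΨu : ∀ a b : ℝ, qu Ψ a b = b * (f1 a b + a * f2 a b))
    (hΨh : ∀ a b : ℝ, qh Ψ a b = b * f2 a b + a * f1 a b)
    (hΘu : ∀ a b : ℝ, qu Θ a b = a * b * f1 a b + ((1 / 2) * a ^ 2 + b) * b * f2 a b)
    (hΘh : ∀ a b : ℝ, qh Θ a b = a * b * f2 a b + ((1 / 2) * a ^ 2 + b) * f1 a b)
    (u h : ℝ → ℝ → ℝ)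
    (hu : ContDiff ℝ (⊤ : ℕ∞) (Function.uncurry u))
    (hh : ContDiff ℝ (⊤ : ℕ∞) (Function.uncurry h))
    (eq1 : ∀ t x : ℝ, pdt u t x + u t x * pdx u t x + pdx h t x
      = f1 (u t x) (h t x) * pdx u t x + f2 (u t x) (h t x) * pdx h t x)
    (eq2 : ∀ t x : ℝ, pdt h t x + u t x * pdx h t x + h t x * pdx u t x
      = h t x * f2 (u t x) (h t x) * pdx u t x + f1 (u t x) (h t x) * pdx h t x) :
    (∀ t x : ℝ,
      pdt u t x
        + pdx (fun t x => (1 / 2) * u t x ^ 2 + h t x - Ξ (u t x) (h t x)) t x = 0) ∧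
    (∀ t x : ℝ,
      pdt h t x
        + pdx (fun t x => h t x * u t x - Φ (u t x) (h t x)) t x = 0) ∧
    (∀ t x : ℝ,
      pdt (fun t x => h t x * u t x) t x
        + pdx (fun t x => h t x * u t x ^ 2 + (1 / 2) * h t x ^ 2
            - Ψ (u t x) (h t x)) t x = 0) ∧
    (∀ t x : ℝ,
      pdt (fun t x => (1 / 2) * (h t x * u t x ^ 2 + h t x ^ 2)) t x
        + pdx (fun t x => (1 / 2) * h t x * u t x ^ 3 + h t x ^ 2 * u t x
            - Θ (u t x) (h t x)) t x = 0) := by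
  have hud : Differentiable ℝ (Function.uncurry u) := hu.differentiable (by simp)
  have hhd : Differentiable ℝ (Function.uncurry h) := hh.differentiable (by simp)
  have hux : ∀ t x : ℝ, HasDerivAt (fun s => u t s) (pdx u t x) x := fun t x => by
    have hd : DifferentiableAt ℝ (fun s => u t s) x :=
      (hud.comp ((differentiable_const t).prodMk differentiable_id)) x
    exact hd.hasDerivAt
  have hhx : ∀ t x : ℝ, HasDerivAt (fun s => h t s) (pdx h t x) x := fun t x => by
    have hd : DifferentiableAt ℝ (fun s => h t s) x :=
      (hhd.comp ((differentiable_const t).prodMk differentiable_id)) x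
    exact hd.hasDerivAt
  have hut : ∀ t x : ℝ, HasDerivAt (fun s => u s x) (pdt u t x) t := fun t x => by
    have hd : DifferentiableAt ℝ (fun s => u s x) t :=
      (hud.comp (differentiable_id.prodMk (differentiable_const x))) t
    exact hd.hasDerivAt
  have hht : ∀ t x : ℝ, HasDerivAt (fun s => h s x) (pdt h t x) t := fun t x => by
    have hd : DifferentiableAt ℝ (fun s => h s x) t :=
      (hhd.comp (differentiable_id.prodMk (differentiable_const x))) t
    exact hd.hasDerivAt
  refine ⟨fun t x => ?_, fun t x => ?_, fun t x => ?_, fun t x => ?_⟩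
  · have hd := ((((hux t x).pow 2).const_mul ((1:ℝ)/2)).add (hhx t x)).sub
      (hasDerivAt_comp2 hΞ (hux t x) (hhx t x))
    simp only [pdx]
    erw [hd.deriv, hΞu, hΞh]
    linear_combination eq1 t x
  · have hd := ((hhx t x).mul (hux t x)).sub
      (hasDerivAt_comp2 hΦ (hux t x) (hhx t x))
    simp only [pdx]
    erw [hd.deriv, hΦu, hΦh]
    linear_combination eq2 t x
  · have hdT := (hht t x).mul (hut t x)
    have hdX := (((hhx t x).mul ((hux t x).pow 2)).add
        (((hhx t x).pow 2).const_mul ((1:ℝ)/2))).sub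
      (hasDerivAt_comp2 hΨ (hux t x) (hhx t x))
    simp only [pdt, pdx]
    erw [hdT.deriv, hdX.deriv, hΨu, hΨh]
    simp only [Pi.pow_apply]
    linear_combination u t x * eq2 t x + h t x * eq1 t x
  · have hdT := (((hht t x).mul ((hut t x).pow 2)).add ((hht t x).pow 2)).const_mul
      ((1:ℝ)/2)
    have hdX := ((((hhx t x).const_mul ((1:ℝ)/2)).mul ((hux t x).pow 3)).add
        (((hhx t x).pow 2).mul (hux t x))).sub
      (hasDerivAt_comp2 hΘ (hux t x) (hhx t x))
    simp only [pdt, pdx]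
    erw [hdT.deriv, hdX.deriv, hΘu, hΘh]
    simp only [Pi.pow_apply]
    linear_combination (1 / 2 * u t x ^ 2 + h t x) * eq2 t x
      + (h t x * u t x) * eq1 t x
end

section
/- Let c, d ∈ ℝ and λ > 0. Let u, h : ℝ² → ℝ be smooth functions of (t,x) with u_x(t,x) > 0 for all (t,x), satisfying the conservative dissipative shallow-water system u_t + u·u_x + h_x = ∂_x(c·h²·(u_x)^{2d}) and h_t + u·h_x + h·u_x = 0 on ℝ², where (u_x)^{2d} denotes the real power u_x^{2d}. Define ũ(t,x) = λ^d·u(t/λ, x/λ^{1+d}) and h̃(t,x) = λ^{2d}·h(t/λ, x/λ^{1+d}). Then ũ_x > 0 everywhere and ũ, h̃ satisfy the same system: ũ_t + ũ·ũ_x + h̃_x = ∂_x(c·h̃²·(ũ_x)^{2d}) and h̃_t + ũ·h̃_x + h̃·ũ_x = 0 on ℝ². -/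
private lemma deriv_scale (g : ℝ → ℝ) (k b x : ℝ)
    (hg : DifferentiableAt ℝ g (x * b)) :
    deriv (fun s => k * g (s * b)) x = k * b * deriv g (x * b) := by
  have h1 : HasDerivAt (fun s : ℝ => s * b) b x := hasDerivAt_mul_const b
  have h2 : HasDerivAt (fun s => k * g (s * b)) (k * (deriv g (x * b) * b)) x :=
    (hg.hasDerivAt.comp x h1).const_mul k
  rw [h2.deriv]; ring

/-- The invariant conservative dissipation scheme
u_t + uu_x + h_x = ∂_x(c·h²·u_x^{2d}), h_t + uh_x + hu_x = 0
for the shallow-water equations is invariant under the scaling symmetry generated by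
t∂_t + (1+d)x∂_x + du∂_u + 2dh∂_h. -/
theorem invariant_conservative_dissipation_scaling_invariance
    (c d : ℝ) (l : ℝ) (hl : 0 < l)
    (u h : ℝ → ℝ → ℝ)
    (hu : ContDiff ℝ (⊤ : ℕ∞) (Function.uncurry u))
    (hh : ContDiff ℝ (⊤ : ℕ∞) (Function.uncurry h))
    (hux : ∀ t x : ℝ, 0 < pdx u t x)
    (eq1 : ∀ t x : ℝ, pdt u t x + u t x * pdx u t x + pdx h t x
      = pdx (fun t x => c * h t x ^ 2 * pdx u t x ^ (2 * d)) t x)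
    (eq2 : ∀ t x : ℝ, pdt h t x + u t x * pdx h t x + h t x * pdx u t x = 0)
    (ut ht : ℝ → ℝ → ℝ)
    (hut : ∀ t x : ℝ, ut t x = l ^ d * u (t / l) (x / l ^ (1 + d)))
    (hht : ∀ t x : ℝ, ht t x = l ^ (2 * d) * h (t / l) (x / l ^ (1 + d))) :
    (∀ t x : ℝ, 0 < pdx ut t x) ∧
    (∀ t x : ℝ, pdt ut t x + ut t x * pdx ut t x + pdx ht t x
      = pdx (fun t x => c * ht t x ^ 2 * pdx ut t x ^ (2 * d)) t x) ∧
    (∀ t x : ℝ, pdt ht t x + ut t x * pdx ht t x + ht t x * pdx ut t x = 0) := by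
  have hl0 : l ≠ 0 := ne_of_gt hl
  set L := l ^ (1 + d) with hL
  have hLpos : 0 < L := Real.rpow_pos_of_pos hl _
  have hApos : (0:ℝ) < l ^ d := Real.rpow_pos_of_pos hl d
  have hBpos : (0:ℝ) < l ^ (2*d) := Real.rpow_pos_of_pos hl (2*d)
  have c1 : l ^ d * L⁻¹ = l⁻¹ := by
    rw [hL, ← Real.rpow_neg hl.le, ← Real.rpow_add hl,
      show d + -(1+d) = -1 by ring, Real.rpow_neg_one]
  have c2 : l ^ (2*d) * L⁻¹ = l ^ d * l⁻¹ := by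
    rw [hL, ← Real.rpow_neg hl.le, ← Real.rpow_add hl,
      show 2*d + -(1+d) = d + -1 by ring, Real.rpow_add hl, Real.rpow_neg_one]
  have c3 : l ^ d * l ^ d = l ^ (2*d) := by
    rw [← Real.rpow_add hl]; ring_nf
  -- smoothness of slices
  have huX : ∀ t, ContDiff ℝ (⊤ : ℕ∞) (fun x => u t x) := fun t =>
    hu.comp (contDiff_const.prodMk contDiff_id)
  have huT : ∀ x, ContDiff ℝ (⊤ : ℕ∞) (fun t => u t x) := fun x =>
    hu.comp (contDiff_id.prodMk contDiff_const)
  have hhX : ∀ t, ContDiff ℝ (⊤ : ℕ∞) (fun x => h t x) := fun t =>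
    hh.comp (contDiff_const.prodMk contDiff_id)
  have hhT : ∀ x, ContDiff ℝ (⊤ : ℕ∞) (fun t => h t x) := fun x =>
    hh.comp (contDiff_id.prodMk contDiff_const)
  have hdu : ∀ t, Differentiable ℝ (fun x => pdx u t x) := fun t => by
    have h1 : ContDiff ℝ ((⊤ : ℕ∞) : WithTop ℕ∞) (fun x => u t x) := (huX t).of_le (by simp)
    have h2 := ((contDiff_infty_iff_deriv.mp h1).2).differentiable
      (by simp)
    simpa [pdx] using h2
  -- scaled partial derivatives
  have hutx : ∀ t x, pdx ut t x = l ^ d * L⁻¹ * pdx u (t/l) (x/L) := by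
    intro t x
    have he : (fun s => ut t s) = fun s => l ^ d * (fun y => u (t/l) y) (s * L⁻¹) := by
      funext s; simp only [hut, div_eq_mul_inv]
    rw [pdx, he, deriv_scale _ _ _ _ (((huX (t/l)).differentiable (by simp)) _)]
    simp only [pdx, div_eq_mul_inv]
  have hutt : ∀ t x, pdt ut t x = l ^ d * l⁻¹ * pdt u (t/l) (x/L) := by
    intro t x
    have he : (fun s => ut s x) = fun s => l ^ d * (fun y => u y (x/L)) (s * l⁻¹) := by
      funext s; simp only [hut, div_eq_mul_inv]
    rw [pdt, he, deriv_scale _ _ _ _ (((huT (x/L)).differentiable (by simp)) _)]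
    simp only [pdt, div_eq_mul_inv]
  have hhtx : ∀ t x, pdx ht t x = l ^ (2*d) * L⁻¹ * pdx h (t/l) (x/L) := by
    intro t x
    have he : (fun s => ht t s) = fun s => l ^ (2*d) * (fun y => h (t/l) y) (s * L⁻¹) := by
      funext s; simp only [hht, div_eq_mul_inv]
    rw [pdx, he, deriv_scale _ _ _ _ (((hhX (t/l)).differentiable (by simp)) _)]
    simp only [pdx, div_eq_mul_inv]
  have hhtt : ∀ t x, pdt ht t x = l ^ (2*d) * l⁻¹ * pdt h (t/l) (x/L) := by
    intro t x
    have he : (fun s => ht s x) = fun s => l ^ (2*d) * (fun y => h y (x/L)) (s * l⁻¹) := by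
      funext s; simp only [hht, div_eq_mul_inv]
    rw [pdt, he, deriv_scale _ _ _ _ (((hhT (x/L)).differentiable (by simp)) _)]
    simp only [pdt, div_eq_mul_inv]
  refine ⟨?_, ?_, ?_⟩
  · intro t x
    rw [hutx]
    exact mul_pos (mul_pos hApos (inv_pos.mpr hLpos)) (hux _ _)
  · intro t x
    set F : ℝ → ℝ → ℝ := fun a b => c * h a b ^ 2 * pdx u a b ^ (2*d) with hF
    have hFdiff : ∀ a, Differentiable ℝ (fun b => F a b) := by
      intro a b
      have h1 : DifferentiableAt ℝ (fun b => h a b) b := (hhX a).differentiable (by simp) b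
      have h2 : DifferentiableAt ℝ (fun b => pdx u a b) b := hdu a b
      have h3 : DifferentiableAt ℝ (fun b => pdx u a b ^ (2*d)) b :=
        h2.rpow_const (Or.inl (ne_of_gt (hux a b)))
      exact ((differentiableAt_const c).mul (h1.pow 2)).mul h3
    have hG : (fun t x => c * ht t x ^ 2 * pdx ut t x ^ (2*d))
        = fun t x => l ^ (2*d) * F (t/l) (x/L) := by
      funext a b
      rw [hht, hutx, c1, hF]
      rw [Real.mul_rpow (inv_nonneg.mpr hl.le) (le_of_lt (hux _ _)), Real.inv_rpow hl.le]
      field_simp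
    have hRHS : pdx (fun t x => c * ht t x ^ 2 * pdx ut t x ^ (2*d)) t x
        = l ^ (2*d) * L⁻¹ * pdx F (t/l) (x/L) := by
      rw [hG, pdx]
      have he : (fun s => l ^ (2*d) * F (t/l) (s/L))
          = fun s => l ^ (2*d) * (fun y => F (t/l) y) (s * L⁻¹) := by
        funext s; simp only [div_eq_mul_inv]
      rw [he, deriv_scale _ _ _ _ (hFdiff (t/l) _)]
      simp only [pdx, div_eq_mul_inv]
    rw [hutt, hutx, hhtx, hut, hRHS, c1, c2]
    linear_combination (l ^ d * l⁻¹) * eq1 (t/l) (x/L)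
  · intro t x
    rw [hhtt, hutx, hhtx, hut, hht, c1, c2]
    linear_combination (l ^ (2*d) * l⁻¹) * eq2 (t/l) (x/L)
      + (l⁻¹ * u (t/l) (x/L) * pdx h (t/l) (x/L)
        + l⁻¹ * h (t/l) (x/L) * pdx u (t/l) (x/L) - l⁻¹ * h (t/l) (x/L) * pdx u (t/l) (x/L)) * c3
end

section
/- Let c₁, c₂ ∈ ℝ, let g¹ : ℝ → ℝ be smooth with antiderivative G (G' = g¹), and let u : ℝ² → ℝ be a smooth function of (t,x). Define the Lagrangian density L(t,x) = ½u_xx² − ((1−c₂)/6)·u_x³ − ½u_t·u_x + (c₁/2)·u_x² − G(u). Then the Euler–Lagrange expression of L, namely E(L) := ∂L/∂u − ∂_t(∂L/∂u_t) − ∂_x(∂L/∂u_x) + ∂_x²(∂L/∂u_xx) (where ∂L/∂u = −g¹(u), ∂L/∂u_t = −½u_x, ∂L/∂u_x = −((1−c₂)/2)·u_x² − ½u_t + c₁·u_x, ∂L/∂u_xx = u_xx, each evaluated along u and then totally differentiated in t and x), satisfies the pointwise identity E(L) = u_tx + u_x·u_xx + u_xxxx − (c₂·u_x + c₁)·u_xx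 − g¹(u) on ℝ². Hence the closed potential Korteweg–de Vries equation u_tx + u_x·u_xx + u_xxxx = (c₂·u_x + c₁)·u_xx + g¹(u) is the Euler–Lagrange equation of the Lagrangian L, i.e. this variational parameterization of the potential KdV equation preserves its variational structure. -/
open Function

private lemma hasDerivAt_x {u : ℝ → ℝ → ℝ} (hu : ContDiff ℝ (⊤ : ℕ∞) (uncurry u)) (t x : ℝ) :
    HasDerivAt (fun s => u t s) (fderiv ℝ (uncurry u) (t, x) (0, 1)) x := by
  have h1 : HasDerivAt (fun s : ℝ => ((t, s) : ℝ × ℝ)) ((0 : ℝ), (1 : ℝ)) x :=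
    (hasDerivAt_const x t).prodMk (hasDerivAt_id x)
  have h2 := (hu.differentiable (by simp) (t, x)).hasFDerivAt
  exact h2.comp_hasDerivAt x h1

private lemma hasDerivAt_t {u : ℝ → ℝ → ℝ} (hu : ContDiff ℝ (⊤ : ℕ∞) (uncurry u)) (t x : ℝ) :
    HasDerivAt (fun s => u s x) (fderiv ℝ (uncurry u) (t, x) (1, 0)) t := by
  have h1 : HasDerivAt (fun s : ℝ => ((s, x) : ℝ × ℝ)) ((1 : ℝ), (0 : ℝ)) t :=
    (hasDerivAt_id t).prodMk (hasDerivAt_const t x)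
  have h2 := (hu.differentiable (by simp) (t, x)).hasFDerivAt
  exact h2.comp_hasDerivAt t h1

private lemma pdx_hasDerivAt {u : ℝ → ℝ → ℝ} (hu : ContDiff ℝ (⊤ : ℕ∞) (uncurry u)) (t x : ℝ) :
    HasDerivAt (fun s => u t s) (pdx u t x) x :=
  (hasDerivAt_x hu t x).differentiableAt.hasDerivAt

private lemma pdt_hasDerivAt {u : ℝ → ℝ → ℝ} (hu : ContDiff ℝ (⊤ : ℕ∞) (uncurry u)) (t x : ℝ) :
    HasDerivAt (fun s => u s x) (pdt u t x) t :=
  (hasDerivAt_t hu t x).differentiableAt.hasDerivAt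

private lemma smooth_D {F : ℝ × ℝ → ℝ} (hF : ContDiff ℝ (⊤ : ℕ∞) F) (v : ℝ × ℝ) :
    ContDiff ℝ (⊤ : ℕ∞) (fun p => fderiv ℝ F p v) :=
  (hF.fderiv_right (by simp)).clm_apply contDiff_const

private lemma uncurry_pdx {u : ℝ → ℝ → ℝ} (hu : ContDiff ℝ (⊤ : ℕ∞) (uncurry u)) :
    uncurry (pdx u) = fun p : ℝ × ℝ => fderiv ℝ (uncurry u) p (0, 1) :=
  funext fun p => (hasDerivAt_x hu p.1 p.2).deriv

private lemma uncurry_pdt {u : ℝ → ℝ → ℝ} (hu : ContDiff ℝ (⊤ : ℕ∞) (uncurry u)) :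
    uncurry (pdt u) = fun p : ℝ × ℝ => fderiv ℝ (uncurry u) p (1, 0) :=
  funext fun p => (hasDerivAt_t hu p.1 p.2).deriv

private lemma smooth_pdx_s19 {u : ℝ → ℝ → ℝ} (hu : ContDiff ℝ (⊤ : ℕ∞) (uncurry u)) :
    ContDiff ℝ (⊤ : ℕ∞) (uncurry (pdx u)) := by
  rw [uncurry_pdx hu]; exact smooth_D hu _

private lemma smooth_pdt {u : ℝ → ℝ → ℝ} (hu : ContDiff ℝ (⊤ : ℕ∞) (uncurry u)) :
    ContDiff ℝ (⊤ : ℕ∞) (uncurry (pdt u)) := by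
  rw [uncurry_pdt hu]; exact smooth_D hu _

/-- directional derivative of the derivative field along the t-curve -/
private lemma hasDerivAt_D_t {F : ℝ × ℝ → ℝ} (hF : ContDiff ℝ (⊤ : ℕ∞) F) (v : ℝ × ℝ) (t x : ℝ) :
    HasDerivAt (fun s => fderiv ℝ F (s, x) v)
      (fderiv ℝ (fderiv ℝ F) (t, x) (1, 0) v) t := by
  have h1 : HasDerivAt (fun s : ℝ => ((s, x) : ℝ × ℝ)) ((1 : ℝ), (0 : ℝ)) t :=
    (hasDerivAt_id t).prodMk (hasDerivAt_const t x)
  have h2 := (((hF.fderiv_right (m := (⊤ : ℕ∞)) (by simp)).differentiable (by simp)) (t, x)).hasFDerivAt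
  have h3 : HasDerivAt (fun s => fderiv ℝ F (s, x))
      (fderiv ℝ (fderiv ℝ F) (t, x) (1, 0)) t := h2.comp_hasDerivAt t h1
  have h4 := h3.clm_apply (hasDerivAt_const t v)
  simpa using h4

private lemma hasDerivAt_D_x {F : ℝ × ℝ → ℝ} (hF : ContDiff ℝ (⊤ : ℕ∞) F) (v : ℝ × ℝ) (t x : ℝ) :
    HasDerivAt (fun s => fderiv ℝ F (t, s) v)
      (fderiv ℝ (fderiv ℝ F) (t, x) (0, 1) v) x := by
  have h1 : HasDerivAt (fun s : ℝ => ((t, s) : ℝ × ℝ)) ((0 : ℝ), (1 : ℝ)) x :=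
    (hasDerivAt_const x t).prodMk (hasDerivAt_id x)
  have h2 := (((hF.fderiv_right (m := (⊤ : ℕ∞)) (by simp)).differentiable (by simp)) (t, x)).hasFDerivAt
  have h3 : HasDerivAt (fun s => fderiv ℝ F (t, s))
      (fderiv ℝ (fderiv ℝ F) (t, x) (0, 1)) x := h2.comp_hasDerivAt x h1
  have h4 := h3.clm_apply (hasDerivAt_const x v)
  simpa using h4

/-- Clairaut for curried functions. -/
private lemma mixed_symm {u : ℝ → ℝ → ℝ} (hu : ContDiff ℝ (⊤ : ℕ∞) (uncurry u)) (t x : ℝ) :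
    pdx (pdt u) t x = pdt (pdx u) t x := by
  have e1 : (fun s => pdx u s x) = fun s => fderiv ℝ (uncurry u) (s, x) (0, 1) :=
    funext fun s => (hasDerivAt_x hu s x).deriv
  have e2 : (fun s => pdt u t s) = fun s => fderiv ℝ (uncurry u) (t, s) (1, 0) :=
    funext fun s => (hasDerivAt_t hu t s).deriv
  have h1 : pdt (pdx u) t x = fderiv ℝ (fderiv ℝ (uncurry u)) (t, x) (1, 0) (0, 1) := by
    show deriv (fun s => pdx u s x) t = _
    rw [e1]
    exact (hasDerivAt_D_t hu (0, 1) t x).deriv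
  have h2 : pdx (pdt u) t x = fderiv ℝ (fderiv ℝ (uncurry u)) (t, x) (0, 1) (1, 0) := by
    show deriv (fun s => pdt u t s) x = _
    rw [e2]
    exact (hasDerivAt_D_x hu (1, 0) t x).deriv
  rw [h1, h2]
  exact second_derivative_symmetric
    (fun y => (hu.differentiable (by simp) y).hasFDerivAt)
    (((hu.fderiv_right (m := (⊤ : ℕ∞)) (by simp)).differentiable (by simp) (t, x)).hasFDerivAt) _ _

/-- The closed potential Korteweg–de Vries equation
u_tx + u_x·u_xx + u_xxxx = (c₂u_x + c₁)u_xx + g¹(u)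
is the Euler–Lagrange equation of the Lagrangian
L = ½u_xx² − ((1−c₂)/6)u_x³ − ½u_t·u_x + (c₁/2)u_x² − G(u):
the Euler–Lagrange expression
E(L) = ∂L/∂u − ∂_t(∂L/∂u_t) − ∂_x(∂L/∂u_x) + ∂_x²(∂L/∂u_xx),
with ∂L/∂u = −g¹(u), ∂L/∂u_t = −½u_x, ∂L/∂u_x = −((1−c₂)/2)u_x² − ½u_t + c₁u_x and
∂L/∂u_xx = u_xx evaluated along u, satisfies
E(L) = u_tx + u_x·u_xx + u_xxxx − (c₂u_x + c₁)u_xx − g¹(u) pointwise. -/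
theorem closed_pkdv_euler_lagrange_identity
    (c₁ c₂ : ℝ) (g1 G : ℝ → ℝ)
    (hg1 : ContDiff ℝ (⊤ : ℕ∞) g1)
    (hG : ∀ y : ℝ, HasDerivAt G (g1 y) y)
    (u : ℝ → ℝ → ℝ)
    (hu : ContDiff ℝ (⊤ : ℕ∞) (Function.uncurry u)) :
    ∀ t x : ℝ,
      (-g1 (u t x))
        - pdt (fun t x => -(1 / 2) * pdx u t x) t x
        - pdx (fun t x => -((1 - c₂) / 2) * pdx u t x ^ 2 - (1 / 2) * pdt u t x
            + c₁ * pdx u t x) t x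
        + pdx (pdx (fun t x => pdx (pdx u) t x)) t x
      = pdt (pdx u) t x + pdx u t x * pdx (pdx u) t x + pdx (pdx (pdx (pdx u))) t x
        - (c₂ * pdx u t x + c₁) * pdx (pdx u) t x - g1 (u t x) := by
  intro t x
  have hux : ContDiff ℝ (⊤ : ℕ∞) (uncurry (pdx u)) := smooth_pdx_s19 hu
  have hut : ContDiff ℝ (⊤ : ℕ∞) (uncurry (pdt u)) := smooth_pdt hu
  -- term A
  have hA : pdt (fun t x => -(1 / 2) * pdx u t x) t x
      = -(1 / 2) * pdt (pdx u) t x := by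
    have h := (pdt_hasDerivAt hux t x).const_mul (-(1 / 2) : ℝ)
    exact h.deriv
  -- term B
  have hx1 : HasDerivAt (fun s => pdx u t s) (pdx (pdx u) t x) x := pdx_hasDerivAt hux t x
  have hx2 : HasDerivAt (fun s => pdt u t s) (pdx (pdt u) t x) x := pdx_hasDerivAt hut t x
  have hB : pdx (fun t x => -((1 - c₂) / 2) * pdx u t x ^ 2 - (1 / 2) * pdt u t x
        + c₁ * pdx u t x) t x
      = -((1 - c₂) / 2) * ((2 : ℕ) * pdx u t x ^ 1 * pdx (pdx u) t x)
        - (1 / 2) * pdx (pdt u) t x + c₁ * pdx (pdx u) t x := by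
    have h := (((hx1.pow 2).const_mul (-((1 - c₂) / 2) : ℝ)).sub
        (hx2.const_mul ((1 / 2) : ℝ))).add (hx1.const_mul c₁)
    exact h.deriv
  have heta : (fun t x => pdx (pdx u) t x) = pdx (pdx u) := rfl
  rw [heta, hA, hB, mixed_symm hu t x]
  push_cast
  ring
end
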